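/- arXiv:math/0605690 — 7 statements merged into one kernel-verified Lean document; each statement's English description precedes it below -/
import Mathlib

section
/- If f ∈ k[M_{n,d}] satisfies u * f = f for every u ∈ U, then f lies in the image of j, i.e. f = j(f') where f'(x₁,…,x_n) = f(x₁,…,x_n,0,…,0). (Lemma 2, first part.) -/
open MvPolynomial

/-- The action of `g ∈ GL_d(k)` on `k[M_{n,d}]` by `(g * F)(x) = F(x·g)`,
i.e. substituting `X(i,q) ↦ Σ_s X(i,s)·g(s,q)`. -/
noncomputable def colAct {k : Type*} [Field k] {n d : ℕ} (g : GL (Fin d) k) :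
    MvPolynomial (Fin n × Fin d) k →ₐ[k] MvPolynomial (Fin n × Fin d) k :=
  aeval fun p => ∑ s : Fin d, X (p.1, s) * C ((g : Matrix (Fin d) (Fin d) k) s p.2)

/-- The action of `h ∈ GL_n(k)` on `k[M_{n,d}]` by `(h · F)(x) = F(h⁻¹·x)`,
i.e. substituting `X(i,q) ↦ Σ_s (h⁻¹)(i,s)·X(s,q)`. -/
noncomputable def rowAct {k : Type*} [Field k] {n d : ℕ} (h : GL (Fin n) k) :
    MvPolynomial (Fin n × Fin d) k →ₐ[k] MvPolynomial (Fin n × Fin d) k :=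
  aeval fun p =>
    ∑ s : Fin n, C (((h⁻¹ : GL (Fin n) k) : Matrix (Fin n) (Fin n) k) p.1 s) * X (s, p.2)

/-- The embedding `j : k[M_{n,n}] → k[M_{n,d}]`, `X(i,q) ↦ X(i,q)`. -/
noncomputable def jmap {k : Type*} [Field k] {n d : ℕ} (hnd : n ≤ d) :
    MvPolynomial (Fin n × Fin n) k →ₐ[k] MvPolynomial (Fin n × Fin d) k :=
  aeval fun p => X (p.1, Fin.castLE hnd p.2)

/-- `^H k[M_{n,d}]`, the subalgebra of `H`-invariant polynomials. -/
def HinvAlg {k : Type*} [Field k] {n d : ℕ} (H : Subgroup (GL (Fin n) k)) :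
    Subalgebra k (MvPolynomial (Fin n × Fin d) k) where
  carrier := {F | ∀ h ∈ H, rowAct h F = F}
  mul_mem' := fun ha hb h hh => by rw [map_mul, ha h hh, hb h hh]
  add_mem' := fun ha hb h hh => by rw [map_add, ha h hh, hb h hh]
  algebraMap_mem' := fun r h hh => by simp

/-- `GL_d * j(^H k[M_{n,n}])`: the `k`-subalgebra of `k[M_{n,d}]` generated by all
polarizations `g * (j f)` of `H`-invariants of `n` vectors. -/
noncomputable def polarized {k : Type*} [Field k] {n d : ℕ} (hnd : n ≤ d)
    (H : Subgroup (GL (Fin n) k)) : Subalgebra k (MvPolynomial (Fin n × Fin d) k) :=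
  Algebra.adjoin k
    {F | ∃ g : GL (Fin d) k, ∃ f ∈ HinvAlg (d := n) H, F = colAct g (jmap hnd f)}

lemma eval_aeval' {k : Type*} [Field k] {σ : Type*} (x : σ → k)
    (φ : σ → MvPolynomial σ k) (f : MvPolynomial σ k) :
    eval x (aeval φ f) = eval (fun s => eval x (φ s)) f := by
  have h : (eval x).comp (algebraMap k (MvPolynomial σ k)) = RingHom.id k := by
    ext a; simp [MvPolynomial.algebraMap_eq]
  rw [aeval_def, eval_eval₂, h, eval₂_id]


/-- Lemma 2 (first part): a `U`-invariant polynomial `f ∈ k[M_{n,d}]` lies in the image of `j`;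
indeed `f = j f'` where `f'(x₁,…,x_n) = f(x₁,…,x_n,0,…,0)`. -/
theorem stmt0 {k : Type*} [Field k] [IsAlgClosed k] {n d : ℕ} (hn : 0 < n) (hnd : n ≤ d)
    (f : MvPolynomial (Fin n × Fin d) k)
    (hf : ∀ u : GL (Fin d) k,
      (∀ i : Fin d, (u : Matrix (Fin d) (Fin d) k) i i = 1) →
      (∀ i j : Fin d, j < i → (u : Matrix (Fin d) (Fin d) k) i j = 0) →
      colAct u f = f) :
    jmap hnd
        (aeval (fun p : Fin n × Fin d =>
          if h : (p.2 : ℕ) < n then X (p.1, (⟨(p.2 : ℕ), h⟩ : Fin n)) else 0) f)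
      = f := by
  classical
  set ψ : Fin n × Fin d → MvPolynomial (Fin n × Fin d) k :=
    fun p => if (p.2 : ℕ) < n then X p else 0 with hψ
  -- Step 1: the LHS equals `aeval ψ f`
  have hjq : jmap hnd
      (aeval (fun p : Fin n × Fin d =>
        if h : (p.2 : ℕ) < n then X (p.1, (⟨(p.2 : ℕ), h⟩ : Fin n)) else 0) f)
      = aeval ψ f := by
    have hfun : (fun p : Fin n × Fin d =>
        jmap hnd (if h : (p.2 : ℕ) < n then X (p.1, (⟨(p.2 : ℕ), h⟩ : Fin n)) else 0)) = ψ := by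
      funext p
      by_cases h : (p.2 : ℕ) < n
      · have hcast : Fin.castLE hnd (⟨(p.2 : ℕ), h⟩ : Fin n) = p.2 := by
          apply Fin.ext; rfl
        simp [hψ, h, jmap, hcast]
      · simp [hψ, h]
    rw [← AlgHom.comp_apply, comp_aeval, hfun]
  rw [hjq]
  -- Step 2: pointwise equality on the set where the first n×n block is invertible
  have key : ∀ x : Fin n × Fin d → k,
      IsUnit (Matrix.of fun i j : Fin n => x (i, Fin.castLE hnd j)).det →
      eval x (aeval ψ f) = eval x f := by
    intro x hM
    set M : Matrix (Fin n) (Fin n) k := Matrix.of fun i j => x (i, Fin.castLE hnd j) with hMdef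
    set c : Fin d → Fin n → k := fun q => M⁻¹.mulVec fun i => x (i, q) with hc
    set A : Matrix (Fin d) (Fin d) k := fun s q =>
      (if s = q then 1 else 0) +
      (if hs : (s : ℕ) < n then (if (q : ℕ) < n then 0 else -(c q ⟨s, hs⟩)) else 0)
      with hA
    have hdiag : ∀ i, A i i = 1 := by
      intro i; by_cases h : (i : ℕ) < n <;> simp [hA, h]
    have hlow : ∀ i j : Fin d, j < i → A i j = 0 := by
      intro i j hji
      have hne : i ≠ j := (ne_of_gt hji)
      by_cases h : (i : ℕ) < n
      · have hj : (j : ℕ) < n := lt_trans (Fin.lt_def.mp hji) h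
        simp [hA, hne, h, hj]
      · simp [hA, hne, h]
    have hdet : A.det = 1 := by
      rw [Matrix.det_of_upperTriangular (fun i j h => hlow i j h)]
      simp [hdiag]
    have hU : IsUnit A := (Matrix.isUnit_iff_isUnit_det A).mpr (by rw [hdet]; exact isUnit_one)
    have hcoe : ((hU.unit : GL (Fin d) k) : Matrix (Fin d) (Fin d) k) = A := hU.unit_spec
    -- column computation
    have hcol : ∀ p : Fin n × Fin d, (∑ s : Fin d, x (p.1, s) * A s p.2) =
        (if (p.2 : ℕ) < n then x p else 0) := by
      rintro ⟨i, q⟩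
      simp only [hA, mul_add, Finset.sum_add_distrib]
      have h1 : (∑ s : Fin d, x (i, s) * (if s = q then 1 else 0)) = x (i, q) := by
        simp
      by_cases hq : (q : ℕ) < n
      · have h2 : (∑ s : Fin d, x (i, s) *
            (if hs : (s : ℕ) < n then (if (q : ℕ) < n then 0 else -(c q ⟨s, hs⟩)) else 0)) = 0 := by
          apply Finset.sum_eq_zero
          intro s _
          by_cases hs : (s : ℕ) < n <;> simp [hs, hq]
        rw [h1, h2, add_zero]
        simp [hq]
      · -- reindexing lemma
        have hre : ∀ G : Fin d → k, (∀ s : Fin d, ¬ (s : ℕ) < n → G s = 0) →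
            (∑ s : Fin d, G s) = ∑ t : Fin n, G (Fin.castLE hnd t) := by
          intro G hG
          calc (∑ s : Fin d, G s)
              = ∑ s ∈ Finset.univ.map (Fin.castLEEmb hnd), G s := by
                refine (Finset.sum_subset (Finset.subset_univ _) ?_).symm
                intro s _ hs
                refine hG s fun hlt => hs ?_
                exact Finset.mem_map.mpr ⟨⟨(s : ℕ), hlt⟩, Finset.mem_univ _, Fin.ext rfl⟩
            _ = ∑ t : Fin n, G (Fin.castLE hnd t) := Finset.sum_map _ _ _
        have h2 : (∑ s : Fin d, x (i, s) *
            (if hs : (s : ℕ) < n then (if (q : ℕ) < n then 0 else -(c q ⟨s, hs⟩)) else 0))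
            = - x (i, q) := by
          rw [hre _ (fun s hs => by simp [hs])]
          have : ∀ t : Fin n, x (i, Fin.castLE hnd t) *
              (if hs : ((Fin.castLE hnd t : Fin d) : ℕ) < n then
                (if (q : ℕ) < n then 0 else -(c q ⟨((Fin.castLE hnd t : Fin d) : ℕ), hs⟩)) else 0)
              = -(M i t * c q t) := by
            intro t
            have ht : ((Fin.castLE hnd t : Fin d) : ℕ) < n := t.isLt
            rw [dif_pos ht, if_neg hq]
            have : (⟨((Fin.castLE hnd t : Fin d) : ℕ), ht⟩ : Fin n) = t := Fin.ext rfl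
            rw [this]
            simp only [hMdef, Matrix.of_apply]
            ring
          rw [Finset.sum_congr rfl (fun t _ => this t), Finset.sum_neg_distrib]
          congr 1
          have : (∑ t : Fin n, M i t * c q t) = (M.mulVec (c q)) i := rfl
          rw [this, hc, Matrix.mulVec_mulVec, Matrix.mul_nonsing_inv M hM, Matrix.one_mulVec]
        rw [h1, h2]
        simp [hq]
    -- use invariance
    have hinv := hf hU.unit (fun i => by rw [hcoe]; exact hdiag i)
      (fun i j h => by rw [hcoe]; exact hlow i j h)
    have he1 : eval x (colAct hU.unit f) =
        eval (fun p : Fin n × Fin d => if (p.2 : ℕ) < n then x p else 0) f := by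
      rw [colAct, eval_aeval']
      have hx : (fun p : Fin n × Fin d =>
          eval x (∑ s : Fin d, X (p.1, s) *
            C (((hU.unit : GL (Fin d) k) : Matrix (Fin d) (Fin d) k) s p.2)))
          = fun p : Fin n × Fin d => if (p.2 : ℕ) < n then x p else 0 := by
        funext p
        rw [← hcol p]
        simp [hcoe]
      rw [hx]
    have he2 : eval x (aeval ψ f) =
        eval (fun p : Fin n × Fin d => if (p.2 : ℕ) < n then x p else 0) f := by
      rw [eval_aeval']
      have hx : (fun p : Fin n × Fin d => eval x (ψ p))
          = fun p : Fin n × Fin d => if (p.2 : ℕ) < n then x p else 0 := by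
        funext p
        by_cases h : (p.2 : ℕ) < n <;> simp [hψ, h]
      rw [hx]
    rw [he2, ← he1, hinv]
  -- Step 3: globalize using the generic determinant
  set D : MvPolynomial (Fin n × Fin d) k :=
    (Matrix.of fun i j : Fin n => X (i, Fin.castLE hnd j)).det with hD
  have hDeval : ∀ x : Fin n × Fin d → k,
      eval x D = (Matrix.of fun i j : Fin n => x (i, Fin.castLE hnd j)).det := by
    intro x
    rw [hD, RingHom.map_det]
    congr 1
    funext i j
    simp [Matrix.map_apply]
  have hDne : D ≠ 0 := by
    intro h0
    have h1 : eval (fun p : Fin n × Fin d => if ((p.2 : ℕ) = (p.1 : ℕ)) then 1 else 0) D = 1 := by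
      rw [hDeval]
      have : (Matrix.of fun i j : Fin n =>
          (fun p : Fin n × Fin d => if ((p.2 : ℕ) = (p.1 : ℕ)) then (1:k) else 0) (i, Fin.castLE hnd j))
          = (1 : Matrix (Fin n) (Fin n) k) := by
        funext i j
        by_cases h : (j : ℕ) = (i : ℕ)
        · have : j = i := Fin.ext h
          simp [Matrix.one_apply, this, h]
        · have : ¬ i = j := fun hh => h (by rw [hh])
          simp [Matrix.one_apply, h, this]
      rw [this, Matrix.det_one]
    rw [h0, map_zero] at h1
    exact zero_ne_one h1
  have hg : (aeval ψ f - f) * D = 0 := by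
    apply MvPolynomial.funext
    intro x
    rw [map_mul, map_sub, map_zero, hDeval]
    by_cases hM : IsUnit (Matrix.of fun i j : Fin n => x (i, Fin.castLE hnd j)).det
    · rw [key x hM, sub_self, zero_mul]
    · have h0 : (Matrix.of fun i j : Fin n => x (i, Fin.castLE hnd j)).det = 0 := by
        by_contra h
        exact hM (isUnit_iff_ne_zero.mpr h)
      rw [h0, mul_zero]
  rcases mul_eq_zero.mp hg with h | h
  · exact sub_eq_zero.mp h
  · exact absurd h hDne
end

section
/- A polynomial F ∈ k[M_{n,d}] satisfies (h · F = F for all h ∈ H and u * F = F for all u ∈ U) if and only if F belongs to GL_d * j(^H k[M_{n,n}]) and satisfies u * F = F for all u ∈ U. In other words, ^H k[M_{n,d}]^U = (GL_d * j(^H k[M_{n,n}]))^U. (Lemma 2, second part.) -/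
open MvPolynomial

namespace Stmt1Aux

variable {k : Type*} [Field k] {n d : ℕ}

/-- restriction to the first `n` columns -/
noncomputable def rmap : MvPolynomial (Fin n × Fin d) k →ₐ[k] MvPolynomial (Fin n × Fin n) k :=
  aeval fun p => if h : (p.2 : ℕ) < n then X (p.1, ⟨(p.2 : ℕ), h⟩) else 0

lemma eval_aeval {σ τ : Type*} (f : σ → MvPolynomial τ k) (x : τ → k)
    (F : MvPolynomial σ k) :
    eval x (aeval f F) = eval (fun s => eval x (f s)) F := by
  induction F using MvPolynomial.induction_on with
  | C a => simp
  | add p q hp hq => simp only [map_add, hp, hq]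
  | mul_X p i hp => simp only [map_mul, aeval_X, eval_mul, eval_X, hp]

lemma eval_colAct (g : GL (Fin d) k) (F : MvPolynomial (Fin n × Fin d) k)
    (x : Fin n × Fin d → k) :
    eval x (colAct g F)
      = eval (fun p => ∑ s : Fin d, x (p.1, s) * (g : Matrix (Fin d) (Fin d) k) s p.2) F := by
  rw [colAct, eval_aeval]
  exact congrArg (fun y => eval y F) (funext fun p => by simp)

lemma eval_jmap_rmap (hnd : n ≤ d) (F : MvPolynomial (Fin n × Fin d) k)
    (x : Fin n × Fin d → k) :
    eval x (jmap hnd (rmap F))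
      = eval (fun p => if (p.2 : ℕ) < n then x p else 0) F := by
  rw [rmap, jmap, eval_aeval, eval_aeval]
  refine congrArg (fun y => eval y F) (funext fun p => ?_)
  by_cases h : (p.2 : ℕ) < n
  · simp only [dif_pos h, eval_X, if_pos h]
    congr 1
  · simp [h]

lemma sum_fin_lt {M : Type*} [AddCommMonoid M] (hnd : n ≤ d) (f : Fin d → M)
    (hf : ∀ s : Fin d, ¬ (s : ℕ) < n → f s = 0) :
    ∑ s : Fin d, f s = ∑ t : Fin n, f (Fin.castLE hnd t) := by
  have h1 : ∑ t : Fin n, f (Fin.castLE hnd t)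
      = ∑ s ∈ Finset.univ.map (Fin.castLEEmb hnd), f s := by
    rw [Finset.sum_map]
    rfl
  rw [h1]
  symm
  apply Finset.sum_subset (Finset.subset_univ _)
  intro s _ hs
  apply hf
  intro hlt
  exact hs (Finset.mem_map.mpr ⟨⟨(s : ℕ), hlt⟩, Finset.mem_univ _, by simp [Fin.ext_iff]⟩)


/-- The generic determinant of the first `n` columns. -/
noncomputable def Dpoly (hnd : n ≤ d) : MvPolynomial (Fin n × Fin d) k :=
  Matrix.det (Matrix.of fun i j : Fin n => (X (i, Fin.castLE hnd j) : MvPolynomial (Fin n × Fin d) k))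

lemma eval_Dpoly (hnd : n ≤ d) (x : Fin n × Fin d → k) :
    eval x (Dpoly hnd) = Matrix.det (Matrix.of fun i j : Fin n => x (i, Fin.castLE hnd j)) := by
  rw [Dpoly, RingHom.map_det]
  congr 1
  ext i j
  simp

lemma Dpoly_ne_zero (hnd : n ≤ d) : (Dpoly hnd : MvPolynomial (Fin n × Fin d) k) ≠ 0 := by
  intro h
  have h1 : eval (fun p : Fin n × Fin d => if (p.1 : ℕ) = (p.2 : ℕ) then 1 else 0) (Dpoly hnd)
      = (1 : k) := by
    rw [eval_Dpoly]
    have : (Matrix.of fun i j : Fin n =>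
        (fun p : Fin n × Fin d => if (p.1 : ℕ) = (p.2 : ℕ) then (1:k) else 0) (i, Fin.castLE hnd j))
        = (1 : Matrix (Fin n) (Fin n) k) := by
      ext i j
      simp [Matrix.one_apply, Fin.ext_iff]
    rw [this, Matrix.det_one]
  rw [h] at h1
  simp at h1

lemma key_eval (hnd : n ≤ d) (F : MvPolynomial (Fin n × Fin d) k)
    (hU : ∀ u : GL (Fin d) k,
        (∀ i : Fin d, (u : Matrix (Fin d) (Fin d) k) i i = 1) →
        (∀ i j : Fin d, j < i → (u : Matrix (Fin d) (Fin d) k) i j = 0) →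
        colAct u F = F)
    (x : Fin n × Fin d → k)
    (hdet : Matrix.det (Matrix.of fun i j : Fin n => x (i, Fin.castLE hnd j)) ≠ 0) :
    eval x F = eval (fun p => if (p.2 : ℕ) < n then x p else 0) F := by
  set A : Matrix (Fin n) (Fin n) k := Matrix.of fun i j : Fin n => x (i, Fin.castLE hnd j)
  set B : Matrix (Fin n) (Fin d) k := Matrix.of fun i q => x (i, q)
  set c : Matrix (Fin n) (Fin d) k := -(A⁻¹ * B)
  set M : Matrix (Fin d) (Fin d) k := fun s q =>
    if s = q then 1 else if h : (s : ℕ) < n ∧ n ≤ (q : ℕ) then c ⟨(s : ℕ), h.1⟩ q else 0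
  have hMdiag : ∀ i : Fin d, M i i = 1 := fun i => if_pos rfl
  have hMlow : ∀ i j : Fin d, j < i → M i j = 0 := by
    intro i j hij
    show (if i = j then 1 else if h : (i : ℕ) < n ∧ n ≤ (j : ℕ) then _ else 0) = 0
    rw [if_neg (by intro h; exact absurd h.symm (ne_of_lt hij)), dif_neg]
    rintro ⟨h1, h2⟩
    exact absurd (lt_trans (lt_of_le_of_lt h2 (Fin.lt_iff_val_lt_val.mp hij)) h1)
      (lt_irrefl _)
  have htri : M.BlockTriangular id := fun i j hij => hMlow i j hij
  have hMdet : M.det = 1 := by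
    rw [Matrix.det_of_upperTriangular htri]
    simp [hMdiag]
  let u : GL (Fin d) k := Matrix.GeneralLinearGroup.mkOfDetNeZero M (by rw [hMdet]; exact one_ne_zero)
  have hcoe : (u : Matrix (Fin d) (Fin d) k) = M := rfl
  have hu := hU u (by rw [hcoe]; exact hMdiag) (by rw [hcoe]; exact hMlow)
  have h1 := congrArg (eval x) hu
  rw [eval_colAct, hcoe] at h1
  rw [← h1]
  refine congrArg (fun y => eval y F) (funext fun p => ?_)
  obtain ⟨i, q⟩ := p
  by_cases hq : (q : ℕ) < n
  · have hM : ∀ s : Fin d, M s q = if s = q then 1 else 0 := by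
      intro s
      show (if s = q then 1 else dite _ _ _) = _
      by_cases hsq : s = q
      · rw [if_pos hsq, if_pos hsq]
      · rw [if_neg hsq, if_neg hsq, dif_neg]
        rintro ⟨-, h2⟩
        exact absurd hq (not_lt.mpr h2)
    simp only [hM, mul_ite, mul_one, mul_zero, Finset.sum_ite_eq' Finset.univ q]
    simp [hq]
  · have hM : ∀ s : Fin d, M s q
        = (if s = q then 1 else 0)
          + (if h : (s : ℕ) < n then c ⟨(s : ℕ), h⟩ q else 0) := by
      intro s
      show (if s = q then 1 else dite _ _ _) = _
      by_cases hsq : s = q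
      · rw [if_pos hsq, if_pos hsq, dif_neg]
        · rw [add_zero]
        · subst hsq; exact fun h => hq h
      · rw [if_neg hsq, if_neg hsq, zero_add]
        by_cases hs : (s : ℕ) < n
        · rw [dif_pos ⟨hs, not_lt.mp hq⟩, dif_pos hs]
        · rw [dif_neg (fun h => hs h.1), dif_neg hs]
    simp only [hM, mul_add, Finset.sum_add_distrib, mul_ite, mul_one, mul_zero,
      Finset.sum_ite_eq' Finset.univ q, Finset.mem_univ, if_true, if_neg hq]
    have h2 : ∑ s : Fin d, x (i, s) * (if h : (s : ℕ) < n then c ⟨(s : ℕ), h⟩ q else 0)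
        = ∑ t : Fin n, x (i, Fin.castLE hnd t) * c t q := by
      rw [sum_fin_lt hnd _ (fun s hs => by rw [dif_neg hs, mul_zero])]
      refine Finset.sum_congr rfl fun t _ => ?_
      rw [dif_pos (by simpa using t.isLt)]
      exact congrArg (fun z : Fin n => x (i, Fin.castLE hnd t) * c z q) (Fin.ext rfl)
    rw [h2]
    have h3 : ∑ t : Fin n, x (i, Fin.castLE hnd t) * c t q = (A * c) i q := by
      rw [Matrix.mul_apply]
      rfl
    have h4 : A * c = -B := by
      rw [show c = -(A⁻¹ * B) from rfl, Matrix.mul_neg, ← Matrix.mul_assoc,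
        Matrix.mul_nonsing_inv A (Ne.isUnit hdet), Matrix.one_mul]
    rw [h3, h4]
    show x (i, q) + (-B) i q = 0
    simp [B]

lemma eq_jmap_rmap [Infinite k] (hnd : n ≤ d) (F : MvPolynomial (Fin n × Fin d) k)
    (hU : ∀ u : GL (Fin d) k,
        (∀ i : Fin d, (u : Matrix (Fin d) (Fin d) k) i i = 1) →
        (∀ i j : Fin d, j < i → (u : Matrix (Fin d) (Fin d) k) i j = 0) →
        colAct u F = F) :
    F = jmap hnd (rmap F) := by
  have key : Dpoly hnd * (F - jmap hnd (rmap F)) = 0 := by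
    apply MvPolynomial.funext (q := 0)
    intro x
    rw [map_mul, map_sub, map_zero]
    by_cases hdet : Matrix.det (Matrix.of fun i j : Fin n => x (i, Fin.castLE hnd j)) = 0
    · rw [eval_Dpoly, hdet, zero_mul]
    · rw [key_eval hnd F hU x hdet, eval_jmap_rmap, sub_self, mul_zero]
  rcases mul_eq_zero.mp key with h | h
  · exact absurd h (Dpoly_ne_zero hnd)
  · exact (sub_eq_zero.mp h)

lemma rowAct_colAct (h : GL (Fin n) k) (g : GL (Fin d) k) :
    (rowAct (d := d) h).comp (colAct g) = (colAct g).comp (rowAct h) := by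
  apply algHom_ext
  rintro ⟨i, q⟩
  simp only [AlgHom.comp_apply, colAct, rowAct, aeval_X, map_sum, map_mul, aeval_C,
    algebraMap_eq]
  simp only [Finset.sum_mul, Finset.mul_sum]
  rw [Finset.sum_comm]
  exact Finset.sum_congr rfl fun _ _ => Finset.sum_congr rfl fun _ _ => by ring

lemma rowAct_jmap (hnd : n ≤ d) (h : GL (Fin n) k) :
    (rowAct (d := d) h).comp (jmap hnd) = (jmap hnd).comp (rowAct h) := by
  apply algHom_ext
  rintro ⟨i, q⟩
  simp [rowAct, jmap, algebraMap_eq]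

lemma rmap_rowAct (h : GL (Fin n) k) :
    (rmap (d := d)).comp (rowAct h) = (rowAct (d := n) h).comp rmap := by
  apply algHom_ext
  rintro ⟨i, q⟩
  simp only [AlgHom.comp_apply, rowAct, rmap, aeval_X, map_sum, map_mul, aeval_C,
    algebraMap_eq]
  by_cases hq : (q : ℕ) < n
  · simp [hq]
  · simp [hq]

lemma colAct_one : (colAct (n := n) (1 : GL (Fin d) k)) = AlgHom.id k _ := by
  apply algHom_ext
  rintro ⟨i, q⟩
  simp [colAct, Units.val_one, Matrix.one_apply, apply_ite C, mul_ite,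
    Finset.sum_ite_eq' Finset.univ q]

end Stmt1Aux

/-- Lemma 2 (second part): `^H k[M_{n,d}]^U = (GL_d * j(^H k[M_{n,n}]))^U`. -/
theorem stmt1 {k : Type*} [Field k] [IsAlgClosed k] {n d : ℕ} (hn : 0 < n) (hnd : n ≤ d)
    (H : Subgroup (GL (Fin n) k)) (F : MvPolynomial (Fin n × Fin d) k) :
    (F ∈ HinvAlg H ∧ ∀ u : GL (Fin d) k,
        (∀ i : Fin d, (u : Matrix (Fin d) (Fin d) k) i i = 1) →
        (∀ i j : Fin d, j < i → (u : Matrix (Fin d) (Fin d) k) i j = 0) →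
        colAct u F = F)
      ↔ (F ∈ polarized hnd H ∧ ∀ u : GL (Fin d) k,
        (∀ i : Fin d, (u : Matrix (Fin d) (Fin d) k) i i = 1) →
        (∀ i j : Fin d, j < i → (u : Matrix (Fin d) (Fin d) k) i j = 0) →
        colAct u F = F) := by
  constructor
  · rintro ⟨hH, hU⟩
    refine ⟨?_, hU⟩
    have hr : Stmt1Aux.rmap F ∈ HinvAlg (d := n) H := by
      intro h hh
      have h1 := congrArg (Stmt1Aux.rmap (k := k)) (hH h hh)
      rwa [← AlgHom.comp_apply, Stmt1Aux.rmap_rowAct, AlgHom.comp_apply] at h1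
    have hFeq := Stmt1Aux.eq_jmap_rmap hnd F hU
    rw [hFeq]
    apply Algebra.subset_adjoin
    exact ⟨1, Stmt1Aux.rmap F, hr, by rw [Stmt1Aux.colAct_one]; rfl⟩
  · rintro ⟨hP, hU⟩
    refine ⟨?_, hU⟩
    have hle : polarized hnd H ≤ HinvAlg H := by
      apply Algebra.adjoin_le
      rintro G ⟨g, f, hf, rfl⟩
      intro h hh
      have e1 := congrArg (fun φ : MvPolynomial (Fin n × Fin d) k →ₐ[k]
          MvPolynomial (Fin n × Fin d) k => φ (jmap hnd f))
        (Stmt1Aux.rowAct_colAct h g)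
      simp only [AlgHom.comp_apply] at e1
      have e2 := congrArg (fun φ : MvPolynomial (Fin n × Fin n) k →ₐ[k]
          MvPolynomial (Fin n × Fin d) k => φ f) (Stmt1Aux.rowAct_jmap hnd h)
      simp only [AlgHom.comp_apply] at e2
      rw [e1, e2, hf h hh]
    exact hle hP
end

section
/- Every element of ^H k[M_{n,d}] is integral over the subalgebra GL_d * j(^H k[M_{n,n}]). (Theorem 3, case Z = {0}.) -/
open MvPolynomial

/-!
By the valuative criterion it suffices to show `F(x) ∈ V` for every valuation subring `V` of
`Frac k[M_{n,d}]` containing the polarized invariants evaluated at the generic matrix `x`.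
Column reduction over `V` factors `x = y z` with `y = (x G)|_n`, where `G` and `z` have entries
in `V`. The coefficients of `F(Y Z)` as a polynomial in `Z` are `H`-invariants `f` of `n` vectors,
so it remains to see `f((x G)|_n) ∈ V`. As a polynomial in `G` with coefficients in
`Frac k[M_{n,d}]` this takes values in `V` on `GL_d(k)`, where it is a polarized invariant
evaluated at `x`; since `GL_d(k)` is Zariski dense, each coefficient is a `k`-linear combination
of such values, so it lies in `V`, and then so does the value at `G`.
-/

open Matrix

theorem isIntegral_of_forall_valuationSubring {R K : Type*} [CommRing R] [Field K] [Algebra R K]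
    {x : K} (h : ∀ V : ValuationSubring K, (algebraMap R K).range ≤ V.toSubring → x ∈ V) :
    IsIntegral R x := by
  by_contra hx
  obtain ⟨V, hV, hxV⟩ := Subring.exists_le_valuationSubring_of_isIntegrallyClosedIn
    (R := (integralClosure R K).toSubring) hx
  exact hxV (h V fun _ ⟨r, hr⟩ => hV (hr ▸ isIntegral_algebraMap))

namespace ValuationSubring

variable {K : Type*} [Field K] (V : ValuationSubring K)

theorem exists_forall_eq_mul {ι : Type*} {s : Finset ι} (hs : s.Nonempty) (r : ι → K) :
    ∃ i₀ ∈ s, ∀ i ∈ s, ∃ c ∈ V, r i = c * r i₀ := by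
  obtain ⟨i₀, hi₀, hmax⟩ := s.exists_max_image (fun i => V.valuation (r i)) hs
  refine ⟨i₀, hi₀, fun i hi => ?_⟩
  by_cases h0 : r i₀ = 0
  · have : r i = 0 := by simpa [h0] using hmax i hi
    exact ⟨0, V.zero_mem, by simp [this]⟩
  · refine ⟨r i / r i₀, ?_, by field_simp⟩
    rw [← V.valuation_le_one_iff, map_div₀]
    exact div_le_one_of_le₀ (hmax i hi) zero_le

variable {d : ℕ}

theorem exists_GL_vecMul_eq_sub_smul (p : Fin d) (c : Fin d → V) (hc : c p = 0) :
    ∃ g : GL (Fin d) V, ∀ y : Fin d → K,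
      y ᵥ* (g.map (algebraMap V K) : Matrix (Fin d) (Fin d) K) = y - y p • fun q => (c q : K) := by
  have hsq : vecMulVec (Pi.single p 1) (-c) * vecMulVec (Pi.single p 1) (-c) = 0 := by
    simp [vecMulVec_mul_vecMulVec, hc]
  have hunit : IsUnit (1 + vecMulVec (Pi.single p 1) (-c)) :=
    IsNilpotent.isUnit_one_add ⟨2, by rw [sq, hsq]⟩
  refine ⟨hunit.unit, fun y => ?_⟩
  have hmap : (algebraMap V K).mapMatrix (vecMulVec (Pi.single p 1) (-c)) =
      vecMulVec (Pi.single p 1) (fun q => -(c q : K)) := by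
    ext a b
    by_cases h : a = p <;> simp [vecMulVec, Pi.single_apply, h]
  change y ᵥ* (algebraMap V K).mapMatrix (hunit.unit : Matrix (Fin d) (Fin d) V) = _
  rw [IsUnit.unit_spec, map_add, map_one, hmap, vecMul_add, vecMul_one, vecMul_vecMulVec,
    dotProduct_single, mul_one, sub_eq_add_neg, ← smul_neg]
  rfl

theorem exists_GL_vecMul_eq_zero (p : Fin d) (r : Fin d → K) :
    ∃ g : GL (Fin d) V,
      (∀ y : Fin d → K, (∀ q, p ≤ q → y q = 0) →
        ∀ q, p ≤ q → (y ᵥ* (g.map (algebraMap V K) : Matrix (Fin d) (Fin d) K)) q = 0) ∧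
      ∀ q, p < q → (r ᵥ* (g.map (algebraMap V K) : Matrix (Fin d) (Fin d) K)) q = 0 := by
  classical
  -- swap an entry of least valuation among those from `p` on into position `p`; the later
  -- entries are then `V`-multiples of it and can be cleared
  obtain ⟨q₀, hq₀, hpivot⟩ := V.exists_forall_eq_mul ⟨p, Finset.mem_Ici.2 le_rfl⟩ r
  set σ := Equiv.swap p q₀
  have hσ : ∀ q, p ≤ q → p ≤ σ q := fun q hq => by
    rw [Finset.mem_Ici] at hq₀
    unfold σ
    rw [Equiv.swap_apply_def]
    split_ifs <;> first | assumption | exact le_rfl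
  have hσσ : σ.permMatrix V * σ.permMatrix V = 1 := by
    rw [← permMatrix_mul, Equiv.swap_mul_self, permMatrix_one]
  let s : GL (Fin d) V := ⟨_, _, hσσ, hσσ⟩
  have hs : ∀ y : Fin d → K, y ᵥ* (s.map (algebraMap V K) : Matrix (Fin d) (Fin d) K) = y ∘ σ :=
    fun y => by
      change y ᵥ* (σ.permMatrix V).map (algebraMap V K) = _
      rw [Equiv.Perm.permMatrix, PEquiv.map_toMatrix, ← Equiv.Perm.permMatrix, vecMul_permMatrix,
        Equiv.symm_swap]
  choose c hcV hc using fun q (hq : p < q) => hpivot (σ q) (Finset.mem_Ici.2 (hσ q hq.le))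
  obtain ⟨e, he⟩ := V.exists_GL_vecMul_eq_sub_smul p
    (fun q => if hq : p < q then ⟨c q hq, hcV q hq⟩ else 0) (by simp)
  refine ⟨s * e, ?_, fun q hq => ?_⟩ <;>
    simp only [map_mul, GeneralLinearGroup.coe_mul, ← vecMul_vecMul, hs, he]
  · intro y hy q hq
    simp [hy _ (hσ q hq), hy _ (hσ p le_rfl)]
  · simp [hq, hc q hq, σ, mul_comm]

theorem exists_GL_mul_eq_zero {m : ℕ} (hm : m ≤ d) (x : Matrix (Fin m) (Fin d) K) :
    ∃ g : GL (Fin d) V, ∀ i (q : Fin d), m ≤ (q : ℕ) →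
      (x * (g.map (algebraMap V K) : Matrix (Fin d) (Fin d) K)) i q = 0 := by
  induction m with
  | zero => exact ⟨1, fun i => i.elim0⟩
  | succ m ih =>
    obtain ⟨g₁, hg₁⟩ := ih (Nat.le_of_succ_le hm) (x.submatrix Fin.castSucc id)
    obtain ⟨g₂, hpres, hlast⟩ := V.exists_GL_vecMul_eq_zero ⟨m, hm⟩
      (x (Fin.last m) ᵥ* (g₁.map (algebraMap V K) : Matrix (Fin d) (Fin d) K))
    refine ⟨g₁ * g₂, fun i q hq => ?_⟩
    rw [map_mul, GeneralLinearGroup.coe_mul, ← Matrix.mul_assoc, mul_apply_eq_vecMul,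
      mul_apply_eq_vecMul]
    induction i using Fin.lastCases with
    | last => exact hlast q hq
    | cast j => exact hpres _ (fun q hq => hg₁ j q hq) q (Nat.le_of_succ_le hq)

theorem exists_eq_submatrix_mul {n : ℕ} (hnd : n ≤ d) (x : Matrix (Fin n) (Fin d) K) :
    ∃ G : Matrix (Fin d) (Fin d) K, (∀ a b, G a b ∈ V) ∧
      ∃ z : Matrix (Fin n) (Fin d) K, (∀ a b, z a b ∈ V) ∧
        x = (x * G).submatrix id (Fin.castLE hnd) * z := by
  obtain ⟨g, hg⟩ := V.exists_GL_mul_eq_zero hnd x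
  set G := (g.map (algebraMap V K) : Matrix (Fin d) (Fin d) K)
  set G' := (g⁻¹.map (algebraMap V K) : Matrix (Fin d) (Fin d) K)
  refine ⟨G, fun a b => by simp [G], G'.submatrix (Fin.castLE hnd) id, fun a b => by simp [G'],
    ?_⟩
  have hGG' : G * G' = 1 := by
    rw [← GeneralLinearGroup.coe_mul, ← map_mul, mul_inv_cancel, map_one,
      GeneralLinearGroup.coe_one]
  obtain ⟨e, rfl⟩ := Nat.exists_eq_add_of_le hnd
  conv_lhs => rw [← Matrix.mul_one x, ← hGG', ← Matrix.mul_assoc]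
  ext i q
  simp only [mul_apply (M := x * G), Fin.sum_univ_add, hg i _ (Fin.le_coe_natAdd _ _), zero_mul,
    Finset.sum_const_zero, add_zero, mul_apply (M := (x * G).submatrix _ _)]
  rfl

end ValuationSubring

namespace MvPolynomial

theorem eq_zero_of_forall_eval_GL_eq_zero {k : Type*} [Field k] [Infinite k] {d : ℕ}
    (p : MvPolynomial (Fin d × Fin d) k)
    (hp : ∀ g : GL (Fin d) k, eval (Function.uncurry (g : Matrix (Fin d) (Fin d) k)) p = 0) :
    p = 0 := by
  have hdet : p * (mvPolynomialX (Fin d) (Fin d) k).det = 0 := by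
    refine MvPolynomial.funext fun t => ?_
    rw [map_mul, map_zero, eval_det_mvPolynomialX]
    by_cases ht : (Matrix.of fun i j => t (i, j)).det = 0
    · rw [ht, mul_zero]
    · have : eval t p = 0 := hp (GeneralLinearGroup.mk'' _ (isUnit_iff_ne_zero.mpr ht))
      rw [this, zero_mul]
  exact (mul_eq_zero.mp hdet).resolve_right (det_mvPolynomialX_ne_zero _ _)

variable {k ι I : Type*} [Field k] (t : I → ι → k)

theorem span_range_eval_monomial_eq_top
    (ht : ∀ p : MvPolynomial ι k, (∀ i, eval (t i) p = 0) → p = 0) (S : Finset (ι →₀ ℕ)) :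
    Submodule.span k (Set.range fun i (a : S) => eval (t i) (monomial (a : ι →₀ ℕ) 1)) = ⊤ := by
  classical
  by_contra hne
  obtain ⟨φ, hφ, hφspan⟩ :=
    Submodule.exists_dual_map_eq_bot_of_lt_top (lt_top_iff_ne_top.2 hne) inferInstance
  have hφ_apply : ∀ v : S → k, φ v = ∑ a, v a * φ (Pi.single a 1) := fun v => by
    conv_lhs => rw [← Finset.univ_sum_single v]
    rw [map_sum]
    refine Finset.sum_congr rfl fun a _ => ?_
    rw [← smul_eq_mul, ← map_smul, ← Pi.single_smul, smul_eq_mul, mul_one]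
  have hp : ∑ a : S, monomial (a : ι →₀ ℕ) (φ (Pi.single a 1)) = 0 := ht _ fun i => by
    have : φ _ = 0 := (Submodule.mem_bot k).1 <| hφspan ▸
      Submodule.mem_map_of_mem (Submodule.subset_span (Set.mem_range_self i))
    rw [hφ_apply] at this
    simpa [map_sum, eval_monomial, mul_comm] using this
  refine hφ (LinearMap.ext fun v => ?_)
  have hcoeff : ∀ a : S, φ (Pi.single a 1) = 0 := fun a => by
    simpa [coeff_sum, coeff_monomial] using congrArg (coeff (a : ι →₀ ℕ)) hp
  rw [hφ_apply]
  simp [hcoeff]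

theorem coeff_mem_of_forall_eval_mem {K : Type*} [CommRing K] [Algebra k K]
    (ht : ∀ p : MvPolynomial ι k, (∀ i, eval (t i) p = 0) → p = 0) (W : Submodule k K)
    (P : MvPolynomial ι K) (hP : ∀ i, eval (algebraMap k K ∘ t i) P ∈ W) (m : ι →₀ ℕ) :
    P.coeff m ∈ W := by
  classical
  by_cases hm : m ∈ P.support
  swap
  · rw [notMem_support_iff.1 hm]
    exact W.zero_mem
  let Φ : (P.support → k) →ₗ[k] K := Fintype.linearCombination k fun a => P.coeff a
  have hΦ : ∀ i, Φ (fun a => eval (t i) (monomial (a : ι →₀ ℕ) 1)) ∈ W := fun i => by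
    convert hP i using 1
    conv_rhs => rw [P.as_sum, ← Finset.sum_coe_sort]
    simp [Φ, Fintype.linearCombination_apply, eval_monomial, Algebra.smul_def, map_finsuppProd,
      mul_comm]
  have hspan := (span_range_eval_monomial_eq_top t ht P.support).ge.trans
    (Submodule.span_le.2 (Set.range_subset_iff.2 hΦ) : _ ≤ W.comap Φ)
  simpa [Φ, Fintype.linearCombination_apply, Pi.single_apply] using
    hspan (Submodule.mem_top (x := Pi.single ⟨m, hm⟩ 1))

end MvPolynomial

section Evaluation

variable {k K : Type*} [Field k] [CommRing K] [Algebra k K] {n d : ℕ}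

theorem aeval_colAct (x : Matrix (Fin n) (Fin d) K) (g : GL (Fin d) k)
    (F : MvPolynomial (Fin n × Fin d) k) :
    aeval (Function.uncurry x) (colAct g F) =
      aeval (Function.uncurry (x * (g : Matrix (Fin d) (Fin d) k).map (algebraMap k K))) F := by
  rw [colAct, comp_aeval_apply]
  congr 2
  funext ⟨i, q⟩
  simp [Function.uncurry, mul_apply]

theorem aeval_jmap (hnd : n ≤ d) (y : Matrix (Fin n) (Fin d) K)
    (f : MvPolynomial (Fin n × Fin n) k) :
    aeval (Function.uncurry y) (jmap hnd f) =
      aeval (Function.uncurry (y.submatrix id (Fin.castLE hnd))) f := by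
  rw [jmap, comp_aeval_apply]
  congr 2
  funext ⟨i, q⟩
  simp [Function.uncurry]

end Evaluation

/-- `F ↦ F(Y Z)` for a generic `n × n` matrix `Y`, whose entries are taken as coefficients, and a
generic `n × d` matrix `Z` of variables. -/
noncomputable def substMul (k : Type*) [Field k] (n d : ℕ) :
    MvPolynomial (Fin n × Fin d) k →ₐ[k]
      MvPolynomial (Fin n × Fin d) (MvPolynomial (Fin n × Fin n) k) :=
  aeval fun p => ∑ t, C (X (p.1, t)) * X (t, p.2)

section SubstMul

variable {k : Type*} [Field k] {n d : ℕ}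

theorem aevalTower_substMul {K : Type*} [CommRing K] [Algebra k K]
    (y : Matrix (Fin n) (Fin n) K) (z : Matrix (Fin n) (Fin d) K)
    (F : MvPolynomial (Fin n × Fin d) k) :
    aevalTower (aeval (Function.uncurry y)) (Function.uncurry z) (substMul k n d F) =
      aeval (Function.uncurry (y * z)) F := by
  rw [substMul, comp_aeval_apply]
  congr 2
  funext ⟨i, q⟩
  simp [Function.uncurry, mul_apply]

theorem mapAlgHom_rowAct_substMul (h : GL (Fin n) k) (F : MvPolynomial (Fin n × Fin d) k) :
    mapAlgHom (rowAct h) (substMul k n d F) = substMul k n d (rowAct h F) := by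
  rw [← AlgHom.comp_apply, ← AlgHom.comp_apply]
  congr 1
  refine algHom_ext fun ⟨i, q⟩ => ?_
  simp [substMul, rowAct, Finset.mul_sum, Finset.sum_mul, mul_assoc]
  exact Finset.sum_comm

theorem coeff_substMul_mem_HinvAlg {H : Subgroup (GL (Fin n) k)}
    {F : MvPolynomial (Fin n × Fin d) k} (hF : F ∈ HinvAlg H) (β : Fin n × Fin d →₀ ℕ) :
    (substMul k n d F).coeff β ∈ HinvAlg H := fun h hh => by
  have := congrArg (coeff β) (mapAlgHom_rowAct_substMul h F)
  rwa [hF h hh, mapAlgHom_apply, coeff_map] at this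

end SubstMul

section Main

variable {k K : Type*} [Field k] [Infinite k] [Field K] [Algebra k K] {n d : ℕ}

theorem aeval_mul_mem_of_forall_GL (S : Subalgebra k K) (x : Matrix (Fin n) (Fin d) K)
    (F : MvPolynomial (Fin n × Fin d) k)
    (hF : ∀ g : GL (Fin d) k,
      aeval (Function.uncurry (x * (g : Matrix (Fin d) (Fin d) k).map (algebraMap k K))) F ∈ S)
    {G : Matrix (Fin d) (Fin d) K} (hG : ∀ a b, G a b ∈ S) :
    aeval (Function.uncurry (x * G)) F ∈ S := by
  set P : MvPolynomial (Fin d × Fin d) K := aeval (fun p => ∑ s, C (x p.1 s) * X (s, p.2)) F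
  have heval : ∀ M : Matrix (Fin d) (Fin d) K,
      eval (Function.uncurry M) P = aeval (Function.uncurry (x * M)) F := fun M => by
    change ((aeval (Function.uncurry M)).restrictScalars k) P = _
    rw [comp_aeval_apply]
    congr 2
    funext ⟨i, q⟩
    simp [Function.uncurry, mul_apply]
  have hcoeff := coeff_mem_of_forall_eval_mem
    (fun g : GL (Fin d) k => Function.uncurry (g : Matrix (Fin d) (Fin d) k))
    eq_zero_of_forall_eval_GL_eq_zero (Subalgebra.toSubmodule S) P fun g => by
      change eval (Function.uncurry ((g : Matrix (Fin d) (Fin d) k).map (algebraMap k K))) P ∈ S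
      rw [heval]
      exact hF g
  rw [← heval]
  exact eval_mem (s := S) (fun m _ => hcoeff m) fun p => hG p.1 p.2

theorem aeval_mem_of_forall_polarized_mem (hnd : n ≤ d) (H : Subgroup (GL (Fin n) k))
    (V : ValuationSubring K) (x : Matrix (Fin n) (Fin d) K)
    (hx : ∀ r ∈ polarized hnd H, aeval (Function.uncurry x) r ∈ V)
    {F : MvPolynomial (Fin n × Fin d) k} (hF : F ∈ HinvAlg H) :
    aeval (Function.uncurry x) F ∈ V := by
  let S : Subalgebra k K :=
    { V.toSubring with
      algebraMap_mem' := fun a => by simpa using hx _ ((polarized hnd H).algebraMap_mem a) }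
  obtain ⟨G, hG, z, hz, hxGz⟩ := V.exists_eq_submatrix_mul hnd x
  rw [hxGz, ← aevalTower_substMul]
  refine eval₂_mem (fun β _ => ?_) fun p => hz p.1 p.2
  change aeval _ _ ∈ S
  rw [← aeval_jmap hnd]
  refine aeval_mul_mem_of_forall_GL S x _ (fun g => ?_) hG
  rw [← aeval_colAct]
  exact hx _ (Algebra.subset_adjoin ⟨g, _, coeff_substMul_mem_HinvAlg hF β, rfl⟩)

end Main

theorem stmt2_general {k : Type*} [Field k] [IsAlgClosed k] {n d : ℕ} (hnd : n ≤ d)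
    (H : Subgroup (GL (Fin n) k)) (F : MvPolynomial (Fin n × Fin d) k)
    (hF : F ∈ HinvAlg H) :
    IsIntegral (polarized hnd H) F := by
  set A := MvPolynomial (Fin n × Fin d) k
  set K := FractionRing A
  have hgeneric : ∀ r : A,
      aeval (Function.uncurry fun i q => algebraMap A K (X (i, q))) r = algebraMap A K r :=
    fun r => by
      rw [← IsScalarTower.coe_toAlgHom' k A K]
      conv_rhs => rw [← aeval_X_left_apply r, comp_aeval_apply]
      rfl
  rw [← isIntegral_algHom_iff (IsScalarTower.toAlgHom (polarized hnd H) A K)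
    (IsFractionRing.injective A K)]
  refine isIntegral_of_forall_valuationSubring fun V hV => ?_
  rw [IsScalarTower.coe_toAlgHom', ← hgeneric]
  refine aeval_mem_of_forall_polarized_mem hnd H V _ (fun r hr => ?_) hF
  rw [hgeneric]
  exact hV ⟨⟨r, hr⟩, rfl⟩

/-- Theorem 3 (case `Z = {0}`): every `H`-invariant of `d` vectors is integral over the
algebra of polarized invariants `GL_d * j(^H k[M_{n,n}])`. -/
theorem stmt2 {k : Type*} [Field k] [IsAlgClosed k] {n d : ℕ} (hn : 0 < n) (hnd : n ≤ d)
    (H : Subgroup (GL (Fin n) k)) (F : MvPolynomial (Fin n × Fin d) k)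
    (hF : F ∈ HinvAlg H) :
    IsIntegral (polarized hnd H) F :=
  stmt2_general hnd H F hF
end

section
/- Suppose H is a subgroup of SL_n(k), viewed inside GL_n(k). Let Δ ∈ k[M_{n,d}] be the determinant of the n×n matrix formed by the first n columns, i.e. Δ = det of the matrix (i,l) ↦ X(i,l) for i,l ∈ Fin n. Then for every F ∈ ^H k[M_{n,d}] there is a non-negative integer e such that Δ^e · F ∈ GL_d * j(^H k[M_{n,n}]). Consequently the quotient field of GL_d * j(^H k[M_{n,n}]) equals the quotient field of ^H k[M_{n,d}]. (Theorem 4.) -/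
open MvPolynomial

/-!
Write `x = (a | b)` with `a` the first `n` columns. Substituting `x ↦ a·y`, with `a` kept generic
and `y` a new `n × d` matrix of variables, turns an `H`-invariant `F` into a polynomial in `y`
whose coefficients are `H`-invariants of `a` alone, because `H` acts on `a·y` through `a`.
Evaluating at `y = a⁻¹x` gives back `F`. By Cramer's rule the entries of `Δ·a⁻¹x` are
determinants of `a` with one column replaced by a column of `x`; these are `0`, `Δ`, or the
translate of `j(det)` by a transposition, and `det` is `H`-invariant because `H ≤ SL_n`. Clearing
the denominators puts `Δ^e F` into `GL_d * j(^H k[M_{n,n}])`, and since `Δ` itself lies there,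
the two quotient fields agree.
-/

section AwayIn

variable {R K : Type*} [CommRing R] [CommRing K] [Algebra R K]

/-- When `algebraMap R K s` is a unit, this is the image of `S[1/s]` in `K`. -/
def Subring.awayIn (S : Subring R) {s : R} (hs : s ∈ S) : Subring K where
  carrier := {y | ∃ e : ℕ, ∃ a ∈ S, y * algebraMap R K s ^ e = algebraMap R K a}
  zero_mem' := ⟨0, 0, S.zero_mem, by simp⟩
  one_mem' := ⟨0, 1, S.one_mem, by simp⟩
  add_mem' := by
    rintro y z ⟨e, a, ha, hy⟩ ⟨f, b, hb, hz⟩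
    refine ⟨e + f, a * s ^ f + b * s ^ e,
      S.add_mem (S.mul_mem ha (S.pow_mem hs f)) (S.mul_mem hb (S.pow_mem hs e)), ?_⟩
    simp only [map_add, map_mul, map_pow, ← hy, ← hz]
    ring
  neg_mem' := by
    rintro y ⟨e, a, ha, hy⟩
    exact ⟨e, -a, S.neg_mem ha, by rw [map_neg, ← hy, neg_mul]⟩
  mul_mem' := by
    rintro y z ⟨e, a, ha, hy⟩ ⟨f, b, hb, hz⟩
    refine ⟨e + f, a * b, S.mul_mem ha hb, ?_⟩
    rw [map_mul, ← hy, ← hz]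
    ring

theorem Subring.exists_pow_mul_mem_of_algebraMap_mem_awayIn
    (hinj : Function.Injective (algebraMap R K)) {S : Subring R} {s : R} (hs : s ∈ S) {x : R}
    (hx : algebraMap R K x ∈ S.awayIn hs) : ∃ e : ℕ, s ^ e * x ∈ S := by
  obtain ⟨e, a, ha, hxa⟩ := hx
  rw [← map_pow, ← map_mul, mul_comm, hinj.eq_iff] at hxa
  exact ⟨e, hxa ▸ ha⟩

end AwayIn

theorem Subfield.closure_image_eq_of_exists_pow_mul_mem {R K : Type*} [CommRing R] [Field K]
    (f : R →+* K) {S T : Set R} (hST : S ⊆ T) {s : R} (hs : s ∈ S) (hs0 : f s ≠ 0)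
    (hT : ∀ x ∈ T, ∃ e : ℕ, s ^ e * x ∈ S) :
    Subfield.closure (f '' S) = Subfield.closure (f '' T) := by
  refine le_antisymm (Subfield.closure_mono (Set.image_mono hST)) ?_
  rw [Subfield.closure_le]
  rintro _ ⟨x, hx, rfl⟩
  obtain ⟨e, he⟩ := hT x hx
  have hfx : f x = f (s ^ e * x) / f s ^ e := by
    rw [map_mul, map_pow, mul_div_cancel_left₀ _ (pow_ne_zero e hs0)]
  rw [hfx]
  exact div_mem (Subfield.subset_closure (Set.mem_image_of_mem f he))
    (pow_mem (Subfield.subset_closure (Set.mem_image_of_mem f hs)) e)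

section Invariants

variable {k : Type*} [Field k] {n d : ℕ}

@[simp]
theorem colAct_X (g : GL (Fin d) k) (p : Fin n × Fin d) :
    colAct g (X p : MvPolynomial (Fin n × Fin d) k)
      = ∑ s : Fin d, X (p.1, s) * C ((g : Matrix (Fin d) (Fin d) k) s p.2) :=
  aeval_X _ _

@[simp]
theorem rowAct_X (h : GL (Fin n) k) (p : Fin n × Fin d) :
    rowAct h (X p : MvPolynomial (Fin n × Fin d) k)
      = ∑ s : Fin n, C (((h⁻¹ : GL (Fin n) k) : Matrix (Fin n) (Fin n) k) p.1 s) * X (s, p.2) :=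
  aeval_X _ _

@[simp]
theorem jmap_X (hnd : n ≤ d) (p : Fin n × Fin n) :
    jmap (k := k) hnd (X p) = X (p.1, Fin.castLE hnd p.2) :=
  aeval_X _ _

theorem jmap_eq_rename (hnd : n ≤ d) :
    jmap (k := k) hnd = rename (Prod.map id (Fin.castLE hnd)) :=
  algHom_ext fun p => by simp [Prod.map]

theorem jmap_injective (hnd : n ≤ d) : Function.Injective (jmap (k := k) hnd) := by
  rw [jmap_eq_rename]
  exact rename_injective _ (Function.injective_id.prodMap (Fin.castLE_injective hnd))

@[simp]
theorem colAct_one : colAct (n := n) (1 : GL (Fin d) k) = AlgHom.id k _ :=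
  algHom_ext fun p => by simp [Matrix.one_apply]

theorem rowAct_comp_colAct (h : GL (Fin n) k) (g : GL (Fin d) k) :
    (rowAct h).comp (colAct g) = (colAct g).comp (rowAct h) := by
  refine algHom_ext fun p => ?_
  simp only [AlgHom.comp_apply, colAct_X, rowAct_X, map_sum, map_mul, algHom_C,
    algebraMap_eq, Finset.mul_sum, Finset.sum_mul]
  rw [Finset.sum_comm]
  ring_nf

theorem rowAct_comp_jmap (hnd : n ≤ d) (h : GL (Fin n) k) :
    (rowAct h).comp (jmap hnd) = (jmap hnd).comp (rowAct (d := n) h) :=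
  algHom_ext fun p => by simp

theorem jmap_mem_polarized (hnd : n ≤ d) {H : Subgroup (GL (Fin n) k)}
    {f : MvPolynomial (Fin n × Fin n) k} (hf : f ∈ HinvAlg H) : jmap hnd f ∈ polarized hnd H :=
  Algebra.subset_adjoin ⟨1, f, hf, by simp⟩

theorem polarized_le_HinvAlg (hnd : n ≤ d) (H : Subgroup (GL (Fin n) k)) :
    polarized hnd H ≤ HinvAlg H := by
  refine Algebra.adjoin_le ?_
  rintro _ ⟨g, f, hf, rfl⟩ h hh
  rw [← AlgHom.comp_apply, rowAct_comp_colAct, AlgHom.comp_apply,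
    ← AlgHom.comp_apply (rowAct h), rowAct_comp_jmap, AlgHom.comp_apply, hf h hh]

end Invariants

section Determinant

variable {k : Type*} [Field k] {n d : ℕ}

noncomputable def firstCols (R : Type*) [CommSemiring R] {n d : ℕ} (hnd : n ≤ d) :
    Matrix (Fin n) (Fin n) (MvPolynomial (Fin n × Fin d) R) :=
  Matrix.of fun i l => X (i, Fin.castLE hnd l)

theorem jmap_det_mvPolynomialX (hnd : n ≤ d) :
    jmap hnd (Matrix.mvPolynomialX (Fin n) (Fin n) k).det = (firstCols k hnd).det := by
  rw [AlgHom.map_det]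
  congr 1
  ext i l
  simp [firstCols]

theorem det_firstCols_ne_zero (hnd : n ≤ d) : (firstCols k hnd).det ≠ 0 := by
  rw [← jmap_det_mvPolynomialX, (map_ne_zero_iff _ (jmap_injective hnd))]
  exact Matrix.det_mvPolynomialX_ne_zero _ _

theorem det_mvPolynomialX_mem_HinvAlg {H : Subgroup (GL (Fin n) k)}
    (hH : ∀ h ∈ H, ((h : Matrix (Fin n) (Fin n) k)).det = 1) :
    (Matrix.mvPolynomialX (Fin n) (Fin n) k).det ∈ HinvAlg H := by
  intro h hh
  have hmat : (rowAct h).mapMatrix (Matrix.mvPolynomialX (Fin n) (Fin n) k)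
      = (C : k →+* _).mapMatrix ((h⁻¹ : GL (Fin n) k) : Matrix (Fin n) (Fin n) k)
        * Matrix.mvPolynomialX (Fin n) (Fin n) k := by
    ext i l
    simp [Matrix.mul_apply]
  rw [AlgHom.map_det, hmat, Matrix.det_mul, ← RingHom.map_det, hH _ (H.inv_mem hh), map_one,
    one_mul]

theorem det_firstCols_mem_polarized (hnd : n ≤ d) {H : Subgroup (GL (Fin n) k)}
    (hH : ∀ h ∈ H, ((h : Matrix (Fin n) (Fin n) k)).det = 1) :
    (firstCols k hnd).det ∈ polarized hnd H := by
  rw [← jmap_det_mvPolynomialX]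
  exact jmap_mem_polarized hnd (det_mvPolynomialX_mem_HinvAlg hH)

theorem colAct_swap_jmap_det (hnd : n ≤ d) (l : Fin n) {q : Fin d} (hq : n ≤ q) :
    colAct ((Matrix.permMatrixHom (R := k)).toHomUnits (Equiv.swap (Fin.castLE hnd l) q))
        (jmap hnd (Matrix.mvPolynomialX (Fin n) (Fin n) k).det)
      = (firstCols k hnd).cramer (fun i => X (i, q)) l := by
  rw [AlgHom.map_det, AlgHom.map_det, Matrix.cramer_apply]
  congr 1
  refine Matrix.ext fun i m => ?_
  simp only [AlgHom.mapMatrix_apply, Matrix.map_apply, Matrix.mvPolynomialX_apply, jmap_X,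
    colAct_X, Matrix.updateCol_apply, firstCols, Matrix.of_apply, MonoidHom.coe_toHomUnits,
    Matrix.permMatrixHom_apply, Equiv.swap_inv, PEquiv.toMatrix_apply, Equiv.toPEquiv_apply,
    Option.mem_def, Option.some.injEq, Equiv.swap_apply_eq_iff, MonoidWithZeroHom.map_ite_one_zero,
    mul_ite, mul_one, mul_zero, Finset.sum_ite_eq', Finset.mem_univ, ↓reduceIte]
  split_ifs with hm
  · rw [hm, Equiv.swap_apply_left]
  · rw [Equiv.swap_apply_of_ne_of_ne ((Fin.castLE_injective hnd).ne hm)]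
    intro h
    have := congrArg Fin.val h
    simp only [Fin.val_castLE] at this
    omega

theorem cramer_firstCols_mem_polarized (hnd : n ≤ d) {H : Subgroup (GL (Fin n) k)}
    (hH : ∀ h ∈ H, ((h : Matrix (Fin n) (Fin n) k)).det = 1) (l : Fin n) (q : Fin d) :
    (firstCols k hnd).cramer (fun i => X (i, q)) l ∈ polarized hnd H := by
  by_cases hq : n ≤ q
  · rw [← colAct_swap_jmap_det hnd l hq]
    exact Algebra.subset_adjoin ⟨_, _, det_mvPolynomialX_mem_HinvAlg hH, rfl⟩
  · obtain ⟨m, rfl⟩ : ∃ m : Fin n, Fin.castLE hnd m = q := ⟨⟨q, by omega⟩, rfl⟩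
    have hcol := Matrix.cramer_transpose_row_self (firstCols k hnd).transpose m
    rw [Matrix.transpose_transpose, Matrix.det_transpose] at hcol
    rw [show (fun i => X (i, Fin.castLE hnd m)) = (firstCols k hnd).transpose m from rfl, hcol,
      Pi.single_apply]
    split_ifs
    · exact det_firstCols_mem_polarized hnd hH
    · exact zero_mem _

end Determinant

section Substitution

variable {k : Type*} [Field k] {n d : ℕ}

/-- `F ↦ F(a·y)`, where `a = (X (i, l))` is the generic `n × n` matrix, placed in the coefficient
ring `k[M_{n,n}]`, and `y` is an `n × d` matrix of fresh variables. -/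
noncomputable def substGenericMul (R : Type*) [CommSemiring R] (n d : ℕ) :
    MvPolynomial (Fin n × Fin d) R →ₐ[R]
      MvPolynomial (Fin n × Fin d) (MvPolynomial (Fin n × Fin n) R) :=
  aeval fun p => ∑ l : Fin n, C (X (p.1, l)) * X (l, p.2)

@[simp]
theorem substGenericMul_X (R : Type*) [CommSemiring R] (p : Fin n × Fin d) :
    substGenericMul R n d (X p) = ∑ l : Fin n, C (X (p.1, l)) * X (l, p.2) :=
  aeval_X _ _

theorem mapAlgHom_rowAct_comp_substGenericMul (h : GL (Fin n) k) :
    (mapAlgHom (rowAct h)).comp (substGenericMul k n d)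
      = (substGenericMul k n d).comp (rowAct h) := by
  refine algHom_ext fun p => ?_
  simp only [AlgHom.comp_apply, substGenericMul_X, map_sum, map_mul, mapAlgHom_apply,
    map_C, map_X, AlgHom.coe_toRingHom, rowAct_X, algHom_C, Finset.mul_sum, Finset.sum_mul]
  rw [Finset.sum_comm]
  simp [mul_assoc, MvPolynomial.algebraMap_apply]

theorem coeff_substGenericMul_mem_HinvAlg {H : Subgroup (GL (Fin n) k)}
    {F : MvPolynomial (Fin n × Fin d) k} (hF : F ∈ HinvAlg H) (m : Fin n × Fin d →₀ ℕ) :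
    coeff m (substGenericMul k n d F) ∈ HinvAlg H := by
  intro h hh
  have hcoeff : rowAct h (coeff m (substGenericMul k n d F))
      = coeff m (mapAlgHom (rowAct h) (substGenericMul k n d F)) := by
    rw [mapAlgHom_apply, coeff_map]
    rfl
  rw [hcoeff, ← AlgHom.comp_apply, mapAlgHom_rowAct_comp_substGenericMul, AlgHom.comp_apply,
    hF h hh]

theorem eval₂_cramer_substGenericMul (hnd : n ≤ d) {K : Type*} [Field K]
    [Algebra (MvPolynomial (Fin n × Fin d) k) K]
    (hΔ : algebraMap _ K (firstCols k hnd).det ≠ 0) (F : MvPolynomial (Fin n × Fin d) k) :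
    eval₂ ((algebraMap _ K).comp (jmap hnd).toRingHom)
        (fun p => algebraMap _ K ((firstCols k hnd).cramer (fun i => X (i, p.2)) p.1)
          / algebraMap _ K (firstCols k hnd).det)
        (substGenericMul k n d F)
      = algebraMap _ K F := by
  suffices hcomp : (eval₂Hom ((algebraMap _ K).comp (jmap hnd).toRingHom)
        (fun p => algebraMap _ K ((firstCols k hnd).cramer (fun i => X (i, p.2)) p.1)
          / algebraMap _ K (firstCols k hnd).det)).comp (substGenericMul k n d).toRingHom
      = algebraMap _ K from congrArg (· F) hcomp
  refine ringHom_ext (fun a => ?_) fun p => ?_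
  · simp [substGenericMul, MvPolynomial.algebraMap_apply]
  · have hcramer := congrFun (Matrix.mulVec_cramer (firstCols k hnd) fun i => X (i, p.2)) p.1
    simp only [Matrix.mulVec, dotProduct, Pi.smul_apply, smul_eq_mul] at hcramer
    simp only [RingHom.comp_apply, AlgHom.toRingHom_eq_coe, AlgHom.coe_toRingHom,
      substGenericMul_X, coe_eval₂Hom, eval₂_sum, eval₂_mul, eval₂_C, eval₂_X, jmap_X,
      ← mul_div_assoc, ← Finset.sum_div, ← map_mul, ← map_sum]
    rw [show ∑ l, X (p.1, Fin.castLE hnd l) * _ = _ from hcramer, map_mul,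
      mul_div_cancel_left₀ _ hΔ]

end Substitution

theorem exists_det_firstCols_pow_mul_mem_polarized {k : Type*} [Field k] {n d : ℕ}
    (hnd : n ≤ d) {H : Subgroup (GL (Fin n) k)}
    (hH : ∀ h ∈ H, ((h : Matrix (Fin n) (Fin n) k)).det = 1)
    {F : MvPolynomial (Fin n × Fin d) k} (hF : F ∈ HinvAlg H) :
    ∃ e : ℕ, (firstCols k hnd).det ^ e * F ∈ polarized hnd H := by
  let K := FractionRing (MvPolynomial (Fin n × Fin d) k)
  have hinj := IsFractionRing.injective (MvPolynomial (Fin n × Fin d) k) K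
  have hΔ : algebraMap _ K (firstCols k hnd).det ≠ 0 :=
    (map_ne_zero_iff _ hinj).mpr (det_firstCols_ne_zero hnd)
  refine Subring.exists_pow_mul_mem_of_algebraMap_mem_awayIn
    (S := (polarized hnd H).toSubring) hinj (det_firstCols_mem_polarized hnd hH) ?_
  rw [← eval₂_cramer_substGenericMul hnd hΔ]
  apply eval₂_mem
  · exact fun m _ => ⟨0, _, jmap_mem_polarized hnd (coeff_substGenericMul_mem_HinvAlg hF m),
      by simp⟩
  · exact fun p => ⟨1, _, cramer_firstCols_mem_polarized hnd hH p.1 p.2,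
      by rw [pow_one, div_mul_cancel₀ _ hΔ]⟩

theorem stmt4_general {k : Type*} [Field k] {n d : ℕ} (hnd : n ≤ d)
    (H : Subgroup (GL (Fin n) k))
    (hH : ∀ h ∈ H, ((h : Matrix (Fin n) (Fin n) k)).det = 1) :
    (∀ F ∈ HinvAlg (d := d) H, ∃ e : ℕ,
        (Matrix.of fun i l : Fin n => X (i, Fin.castLE hnd l)).det ^ e * F ∈ polarized hnd H)
    ∧ Subfield.closure
        ((algebraMap (MvPolynomial (Fin n × Fin d) k)
            (FractionRing (MvPolynomial (Fin n × Fin d) k))) '' (polarized hnd H : Set _))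
      = Subfield.closure
        ((algebraMap (MvPolynomial (Fin n × Fin d) k)
            (FractionRing (MvPolynomial (Fin n × Fin d) k))) '' (HinvAlg (d := d) H : Set _)) :=
  ⟨fun _ hF => exists_det_firstCols_pow_mul_mem_polarized hnd hH hF,
    Subfield.closure_image_eq_of_exists_pow_mul_mem _ (polarized_le_HinvAlg hnd H)
      (det_firstCols_mem_polarized hnd hH)
      ((map_ne_zero_iff _ (IsFractionRing.injective _ _)).mpr (det_firstCols_ne_zero hnd))
      fun _ hF => exists_det_firstCols_pow_mul_mem_polarized hnd hH hF⟩

/-- Theorem 4: for `H ≤ SL_n`, every invariant `F ∈ ^H k[M_{n,d}]` satisfies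
`Δ^e·F ∈ GL_d * j(^H k[M_{n,n}])` for some `e ≥ 0`; consequently the two algebras have the
same quotient field (inside the fraction field of `k[M_{n,d}]`). -/
theorem stmt4 {k : Type*} [Field k] [IsAlgClosed k] {n d : ℕ} (hn : 0 < n) (hnd : n ≤ d)
    (H : Subgroup (GL (Fin n) k))
    (hH : ∀ h ∈ H, ((h : Matrix (Fin n) (Fin n) k)).det = 1) :
    (∀ F ∈ HinvAlg (d := d) H, ∃ e : ℕ,
        (Matrix.of fun i l : Fin n => X (i, Fin.castLE hnd l)).det ^ e * F ∈ polarized hnd H)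
    ∧ Subfield.closure
        ((algebraMap (MvPolynomial (Fin n × Fin d) k)
            (FractionRing (MvPolynomial (Fin n × Fin d) k))) '' (polarized hnd H : Set _))
      = Subfield.closure
        ((algebraMap (MvPolynomial (Fin n × Fin d) k)
            (FractionRing (MvPolynomial (Fin n × Fin d) k))) '' (HinvAlg (d := d) H : Set _)) :=
  stmt4_general hnd H hH
end

section
/- Let B be a finitely generated commutative k-algebra on which H acts by k-algebra automorphisms such that every element of B lies in a finite-dimensional H-stable k-subspace. Let H act on B[M_{n,d}] by acting on coefficients through B and substituting X(i,q) ↦ Σ_s (h⁻¹)(i,s)·X(s,q), let GL_d(k) act B-linearly by substituting X(i,q) ↦ Σ_s X(i,s)·g(s,q), and let j : B[M_{n,n}] → B[M_{n,d}] be the B-algebra embedding X(i,q) ↦ X(i,q). For x ∈ Matrix (Fin n) (Fin d) k and a k-algebra homomorphism z : B → k, let ev_{(x,z)} : B[M_{n,d}] → k be evaluation applying z to coefficients and sending X(i,q) to x i q. Then for all (x,z) and (y,z'): if some F ∈ ^H B[M_{n,d}] satisfies ev_{(x,z)}(F) ≠ ev_{(y,z')}(F), then some f in the k-subalgebra generated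 by all g * (j f₀) with g ∈ GL_d(k), f₀ ∈ ^H B[M_{n,n}], satisfies ev_{(x,z)}(f) ≠ ev_{(y,z')}(f). (Theorem 7.) -/
/-!
If `g ∈ M_d(k)` has rank at most `n`, it factors as `g = u₁ b` with `u₁` the first `n` columns of
some `u ∈ GL_d(k)`. Then `X ↦ F(X g)` equals `u · j(F(X' b))`, and `F(X' b)` is again `H`-invariant
since `H` acts on rows while `b` acts on columns; so `F(· g)` is a polarized invariant. If all
polarized invariants agree at `(x,z)` and `(y,z')`, then `F(x g)(z) = F(y g)(z')` whenever
`rank g ≤ n`. Choosing projections `p`, `q` onto the row spaces of `x`, `y` with `x q p = x q`, the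
chain `F(x) = F(xp) = F(yp) = F(yqp) = F(xqp) = F(xq) = F(yq) = F(y)` shows that `F` does not
separate the two points either.
-/

open MvPolynomial

/-- The `B`-linear action of `g ∈ GL_d(k)` on `B[M_{n,d}]`, substituting
`X(i,q) ↦ Σ_s X(i,s)·g(s,q)`. -/
noncomputable def colActB {k B : Type*} [Field k] [CommRing B] [Algebra k B]
    {n d : ℕ} (g : GL (Fin d) k) :
    MvPolynomial (Fin n × Fin d) B →ₐ[B] MvPolynomial (Fin n × Fin d) B :=
  aeval fun p => ∑ s : Fin d,
    X (p.1, s) * C (algebraMap k B ((g : Matrix (Fin d) (Fin d) k) s p.2))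

/-- The action of `h ∈ H` on `B[M_{n,d}]`: apply `ρ h` to the coefficients and substitute
`X(i,q) ↦ Σ_s (h⁻¹)(i,s)·X(s,q)`. -/
noncomputable def rowActB {k B : Type*} [Field k] [CommRing B] [Algebra k B]
    {n d : ℕ} (H : Subgroup (GL (Fin n) k)) (ρ : H →* (B ≃ₐ[k] B)) (h : H) :
    MvPolynomial (Fin n × Fin d) B →+* MvPolynomial (Fin n × Fin d) B :=
  eval₂Hom (C.comp ((ρ h : B ≃ₐ[k] B) : B →+* B))
    (fun p => ∑ s : Fin n,
      C (algebraMap k B ((((h⁻¹ : H) : GL (Fin n) k) : Matrix (Fin n) (Fin n) k) p.1 s))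
        * X (s, p.2))

/-- The `B`-algebra embedding `j : B[M_{n,n}] → B[M_{n,d}]`, `X(i,q) ↦ X(i,q)`. -/
noncomputable def jmapB {k B : Type*} [Field k] [CommRing B] [Algebra k B]
    {n d : ℕ} (hnd : n ≤ d) :
    MvPolynomial (Fin n × Fin n) B →ₐ[B] MvPolynomial (Fin n × Fin d) B :=
  aeval fun p => X (p.1, Fin.castLE hnd p.2)

theorem exists_isCompl_eq_inf_sup_inf {α : Type*} [Lattice α] [BoundedOrder α]
    [IsModularLattice α] [ComplementedLattice α] (a b : α) :
    ∃ c, IsCompl b c ∧ a = a ⊓ b ⊔ a ⊓ c := by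
  obtain ⟨a', hdisj, hsup⟩ :=
    IsModularLattice.exists_disjoint_and_sup_eq (inf_le_left : a ⊓ b ≤ a)
  have ha' : a' ≤ a := hsup ▸ le_sup_right
  have hda'b : Disjoint a' b := by
    rw [disjoint_iff, ← hdisj.symm.eq_bot, ← inf_assoc, inf_eq_left.2 ha']
  obtain ⟨c, hc, hcompl⟩ := hda'b.exists_isCompl
  refine ⟨c, hcompl.symm, le_antisymm ?_ (sup_le inf_le_left inf_le_left)⟩
  conv_lhs => rw [← hsup]
  exact sup_le_sup_left (le_inf ha' hc) _

theorem Submodule.exists_projection_mapsTo {K V : Type*} [DivisionRing K] [AddCommGroup V]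
    [Module K V] (U W : Submodule K V) :
    ∃ π : V →ₗ[K] V, LinearMap.range π = W ∧ (∀ w ∈ W, π w = w) ∧ Set.MapsTo π U U := by
  obtain ⟨C, hC, hU⟩ := exists_isCompl_eq_inf_sup_inf U W
  refine ⟨W.projection C hC, range_projection hC, fun w hw => projection_apply_of_mem_left hC hw,
    fun u hu => ?_⟩
  rw [SetLike.mem_coe, hU] at hu
  obtain ⟨a, ha, c, hc, rfl⟩ := mem_sup.1 hu
  rw [map_add, projection_apply_of_mem_left hC ha.2, projection_apply_right hC ⟨c, hc.2⟩, add_zero]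
  exact ha.1

open Matrix in
theorem mul_toMatrix'_transpose_apply {R m d : Type*} [CommSemiring R] [Fintype d] [DecidableEq d]
    (x : Matrix m d R) (π : (d → R) →ₗ[R] (d → R)) (i : m) :
    (x * (LinearMap.toMatrix' π)ᵀ) i = π (x i) := by
  change x i ᵥ* _ = _
  rw [vecMul_transpose, LinearMap.toMatrix'_mulVec]

open Matrix in
theorem rank_toMatrix'_transpose {k : Type*} [Field k] {d : Type*} [Fintype d] [DecidableEq d]
    (π : (d → k) →ₗ[k] (d → k)) :
    (LinearMap.toMatrix' π)ᵀ.rank = Module.finrank k (LinearMap.range π) := by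
  rw [Matrix.rank_transpose, Matrix.rank, ← Matrix.toLin'_apply', Matrix.toLin'_toMatrix']

open Matrix Submodule in
theorem Matrix.exists_projections_rowSpace {k : Type*} [Field k] {n d : ℕ}
    (x y : Matrix (Fin n) (Fin d) k) :
    ∃ p q : Matrix (Fin d) (Fin d) k,
      p.rank ≤ n ∧ q.rank ≤ n ∧ x * p = x ∧ y * q = y ∧ x * q * p = x * q := by
  have hrank : ∀ z : Matrix (Fin n) (Fin d) k, Module.finrank k (span k (Set.range z)) ≤ n :=
    fun z => by simpa [Set.finrank] using finrank_range_le_card (R := k) z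
  have hrow : ∀ (z : Matrix (Fin n) (Fin d) k) i, z i ∈ span k (Set.range z) :=
    fun z i => subset_span ⟨i, rfl⟩
  obtain ⟨πx, hπx_range, hπx_id, -⟩ := exists_projection_mapsTo ⊥ (span k (Set.range x))
  obtain ⟨πy, hπy_range, hπy_id, hπy_maps⟩ :=
    exists_projection_mapsTo (span k (Set.range x)) (span k (Set.range y))
  refine ⟨(LinearMap.toMatrix' πx)ᵀ, (LinearMap.toMatrix' πy)ᵀ, ?_, ?_, ?_, ?_, ?_⟩
  · rw [rank_toMatrix'_transpose, hπx_range]; exact hrank x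
  · rw [rank_toMatrix'_transpose, hπy_range]; exact hrank y
  · funext i; rw [mul_toMatrix'_transpose_apply, hπx_id _ (hrow x i)]
  · funext i; rw [mul_toMatrix'_transpose_apply, hπy_id _ (hrow y i)]
  · funext i
    rw [mul_toMatrix'_transpose_apply, mul_toMatrix'_transpose_apply,
      hπx_id _ (hπy_maps (hrow x i))]

theorem Matrix.eq_of_forall_rank_le_apply_mul_eq {k α : Type*} [Field k] {n d : ℕ}
    {x y : Matrix (Fin n) (Fin d) k} (e₁ e₂ : Matrix (Fin n) (Fin d) k → α)
    (h : ∀ g : Matrix (Fin d) (Fin d) k, g.rank ≤ n → e₁ (x * g) = e₂ (y * g)) :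
    e₁ x = e₂ y := by
  obtain ⟨p, q, hp, hq, hxp, hyq, hxqp⟩ := x.exists_projections_rowSpace y
  have hqp : (q * p).rank ≤ n := (Matrix.rank_mul_le_left q p).trans hq
  calc e₁ x = e₁ (x * p) := by rw [hxp]
    _ = e₂ (y * p) := h p hp
    _ = e₂ (y * (q * p)) := by rw [← Matrix.mul_assoc, hyq]
    _ = e₁ (x * (q * p)) := (h _ hqp).symm
    _ = e₁ (x * q) := by rw [← Matrix.mul_assoc, hxqp]
    _ = e₂ (y * q) := h q hq
    _ = e₂ y := by rw [hyq]

open Matrix in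
theorem Matrix.exists_GL_submatrix_mul_eq_of_rank_le {k m : Type*} [Field k] [Fintype m]
    [DecidableEq m] {n d : ℕ} (hnd : n ≤ d) (g : Matrix (Fin d) m k) (hg : g.rank ≤ n) :
    ∃ (u : GL (Fin d) k) (b : Matrix (Fin n) m k),
      (u : Matrix (Fin d) (Fin d) k).submatrix id (Fin.castLE hnd) * b = g := by
  set S : Matrix (Fin d) (Fin n) k := (1 : Matrix (Fin d) (Fin d) k).submatrix id (Fin.castLE hnd)
  have hS : Function.Injective S.mulVecLin := by
    intro v w h
    funext t
    simpa [S, mulVec, dotProduct, one_apply] using congr_fun h (Fin.castLE hnd t)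
  obtain ⟨f, hf⟩ := finrank_le_iff_exists_linearMap.1
    (hg.trans_eq (Module.finrank_fin_fun k).symm)
  obtain ⟨φ, hφ⟩ := Submodule.exists_linearEquiv_restrict_eq
    (LinearEquiv.ofInjective (S.mulVecLin ∘ₗ f) (hS.comp hf))
  let u : GL (Fin d) k := GeneralLinearGroup.toLin.symm
    ((LinearMap.GeneralLinearGroup.generalLinearEquiv _ _).symm φ.symm)
  have hu : (u : Matrix (Fin d) (Fin d) k).mulVecLin = φ.symm := by
    rw [← GeneralLinearGroup.coe_toLin, MulEquiv.apply_symm_apply]; rfl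
  refine ⟨u, LinearMap.toMatrix' (f ∘ₗ g.mulVecLin.rangeRestrict), ?_⟩
  have hsub : (u : Matrix (Fin d) (Fin d) k).submatrix id (Fin.castLE hnd) =
      (u : Matrix (Fin d) (Fin d) k) * S :=
    (mul_submatrix_one (Equiv.refl _) _ _).symm
  have hφ' : ∀ w, S.mulVecLin (f w) = φ w := fun w => (hφ w).symm ▸ rfl
  refine Matrix.toLin'.injective (LinearMap.ext fun v => ?_)
  rw [hsub, Matrix.toLin'_mul, Matrix.toLin'_mul, LinearMap.comp_apply, LinearMap.comp_apply,
    Matrix.toLin'_toMatrix', Matrix.toLin'_apply', Matrix.toLin'_apply', Matrix.toLin'_apply', hu,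
    LinearMap.comp_apply, hφ']
  exact φ.symm_apply_apply _

section RightMulSubst

variable {k B : Type*} [Field k] [CommRing B] [Algebra k B] {n m d : ℕ}

noncomputable def rightMulSubst (b : Matrix (Fin m) (Fin d) k) :
    MvPolynomial (Fin n × Fin d) B →ₐ[B] MvPolynomial (Fin n × Fin m) B :=
  aeval fun p => ∑ s : Fin m, X (p.1, s) * C (algebraMap k B (b s p.2))

theorem colActB_eq_rightMulSubst (g : GL (Fin d) k) :
    (colActB g : MvPolynomial (Fin n × Fin d) B →ₐ[B] _) = rightMulSubst (g : Matrix _ _ k) :=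
  rfl

theorem rowActB_rightMulSubst (H : Subgroup (GL (Fin n) k)) (ρ : H →* (B ≃ₐ[k] B)) (h : H)
    (b : Matrix (Fin m) (Fin d) k) (F : MvPolynomial (Fin n × Fin d) B) :
    rowActB H ρ h (rightMulSubst b F) = rightMulSubst b (rowActB H ρ h F) := by
  suffices (rowActB H ρ h).comp (rightMulSubst b : _ →ₐ[B] _).toRingHom =
      (rightMulSubst b : _ →ₐ[B] _).toRingHom.comp (rowActB H ρ h) from
    RingHom.congr_fun this F
  refine MvPolynomial.ringHom_ext (fun c => by simp [rowActB, rightMulSubst]) ?_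
  rintro ⟨i, q⟩
  simp only [rowActB, rightMulSubst, AlgHom.toRingHom_eq_coe, aeval_X, coe_eval₂Hom, eval₂_X,
    map_sum, map_mul, eval₂_C, aeval_C, MvPolynomial.algebraMap_eq, RingHom.comp_apply,
    RingHom.coe_coe, AlgEquiv.commutes, Finset.sum_mul, Finset.mul_sum, mul_assoc]
  exact Finset.sum_comm

theorem eval₂_rightMulSubst (φ : B →ₐ[k] k) (b : Matrix (Fin m) (Fin d) k)
    (x : Matrix (Fin n) (Fin m) k) (F : MvPolynomial (Fin n × Fin d) B) :
    eval₂ (φ : B →+* k) (fun p => x p.1 p.2) (rightMulSubst b F) =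
      eval₂ (φ : B →+* k) (fun p => (x * b) p.1 p.2) F := by
  rw [← coe_eval₂Hom, rightMulSubst, aeval_eq_bind₁, eval₂Hom_bind₁, coe_eval₂Hom]
  congr 1
  funext p
  simp [Matrix.mul_apply]

theorem eval₂_jmapB (φ : B →+* k) (hnd : n ≤ d) (x : Matrix (Fin n) (Fin d) k)
    (F : MvPolynomial (Fin n × Fin n) B) :
    eval₂ φ (fun p => x p.1 p.2) (jmapB (k := k) hnd F) =
      eval₂ φ (fun p => x.submatrix id (Fin.castLE hnd) p.1 p.2) F := by
  rw [← coe_eval₂Hom, jmapB, aeval_eq_bind₁, eval₂Hom_bind₁, coe_eval₂Hom]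
  congr 1
  funext p
  simp

end RightMulSubst

theorem exists_colActB_jmapB_invariant_eval₂_eq_eval₂_mul {k B : Type*} [Field k] [CommRing B]
    [Algebra k B] {n d : ℕ} (hnd : n ≤ d) (H : Subgroup (GL (Fin n) k)) (ρ : H →* (B ≃ₐ[k] B))
    (F : MvPolynomial (Fin n × Fin d) B) (hF : ∀ h : H, rowActB H ρ h F = F)
    (g : Matrix (Fin d) (Fin d) k) (hg : g.rank ≤ n) :
    ∃ (u : GL (Fin d) k) (f₀ : MvPolynomial (Fin n × Fin n) B),
      (∀ h : H, rowActB H ρ h f₀ = f₀) ∧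
      ∀ (φ : B →ₐ[k] k) (x : Matrix (Fin n) (Fin d) k),
        eval₂ (φ : B →+* k) (fun p => x p.1 p.2) (colActB u (jmapB (k := k) hnd f₀)) =
          eval₂ (φ : B →+* k) (fun p => (x * g) p.1 p.2) F := by
  obtain ⟨u, b, hub⟩ := g.exists_GL_submatrix_mul_eq_of_rank_le hnd hg
  refine ⟨u, rightMulSubst b F, fun h => by rw [rowActB_rightMulSubst, hF], fun φ x => ?_⟩
  have hsub : (x * (u : Matrix (Fin d) (Fin d) k)).submatrix id (Fin.castLE hnd) =
      x * (u : Matrix (Fin d) (Fin d) k).submatrix id (Fin.castLE hnd) := by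
    simpa using Matrix.submatrix_mul x _ id id (Fin.castLE hnd) Function.bijective_id
  rw [colActB_eq_rightMulSubst, eval₂_rightMulSubst, eval₂_jmapB, eval₂_rightMulSubst, hsub,
    Matrix.mul_assoc, hub]

theorem stmt7_general {k B : Type*} [Field k] [CommRing B] [Algebra k B]
    {n d : ℕ} (hnd : n ≤ d)
    (H : Subgroup (GL (Fin n) k)) (ρ : H →* (B ≃ₐ[k] B))
    (x y : Matrix (Fin n) (Fin d) k) (z z' : B →ₐ[k] k)
    (F : MvPolynomial (Fin n × Fin d) B)
    (hF : ∀ h : H, rowActB H ρ h F = F)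
    (hsep : eval₂ (z : B →+* k) (fun p => x p.1 p.2) F ≠
      eval₂ (z' : B →+* k) (fun p => y p.1 p.2) F) :
    ∃ f ∈ Algebra.adjoin k
        {G : MvPolynomial (Fin n × Fin d) B | ∃ g : GL (Fin d) k,
          ∃ f₀ : MvPolynomial (Fin n × Fin n) B,
          (∀ h : H, rowActB H ρ h f₀ = f₀) ∧ G = colActB g (jmapB (k := k) hnd f₀)},
      eval₂ (z : B →+* k) (fun p => x p.1 p.2) f ≠
        eval₂ (z' : B →+* k) (fun p => y p.1 p.2) f := by
  by_contra! hcon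
  refine hsep (Matrix.eq_of_forall_rank_le_apply_mul_eq
    (fun w => eval₂ (z : B →+* k) (fun p => w p.1 p.2) F)
    (fun w => eval₂ (z' : B →+* k) (fun p => w p.1 p.2) F) fun g hg => ?_)
  obtain ⟨u, f₀, hf₀, heval⟩ :=
    exists_colActB_jmapB_invariant_eval₂_eq_eval₂_mul hnd H ρ F hF g hg
  rw [← heval, ← heval]
  exact hcon _ (Algebra.subset_adjoin ⟨u, f₀, hf₀, rfl⟩)

/-- Theorem 7 (general `Z`, with `B = k[Z]` and points `(x,z)` of `M_{n,d} × Z`): if an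
`H`-invariant of `B[M_{n,d}]` separates `(x,z)` and `(y,z')`, then some polarized invariant
already separates them. -/
theorem stmt7 {k B : Type*} [Field k] [IsAlgClosed k] [CommRing B] [Algebra k B]
    [Algebra.FiniteType k B] {n d : ℕ} (hn : 0 < n) (hnd : n ≤ d)
    (H : Subgroup (GL (Fin n) k)) (ρ : H →* (B ≃ₐ[k] B))
    (hloc : ∀ b : B, ∃ V : Submodule k B, FiniteDimensional k V ∧ b ∈ V ∧
      ∀ h : H, ∀ v ∈ V, ρ h v ∈ V)
    (x y : Matrix (Fin n) (Fin d) k) (z z' : B →ₐ[k] k)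
    (F : MvPolynomial (Fin n × Fin d) B)
    (hF : ∀ h : H, rowActB H ρ h F = F)
    (hsep : eval₂ (z : B →+* k) (fun p => x p.1 p.2) F ≠
      eval₂ (z' : B →+* k) (fun p => y p.1 p.2) F) :
    ∃ f ∈ Algebra.adjoin k
        {G : MvPolynomial (Fin n × Fin d) B | ∃ g : GL (Fin d) k,
          ∃ f₀ : MvPolynomial (Fin n × Fin n) B,
          (∀ h : H, rowActB H ρ h f₀ = f₀) ∧ G = colActB g (jmapB (k := k) hnd f₀)},
      eval₂ (z : B →+* k) (fun p => x p.1 p.2) f ≠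
        eval₂ (z' : B →+* k) (fun p => y p.1 p.2) f :=
  stmt7_general hnd H ρ x y z z' F hF hsep
end

section
/- Suppose char k = p > 0, n = 2, d = 2p, and H is the subgroup of GL_2(k) consisting of the diagonal matrices diag(a⁻¹, a^{2p}) for a ∈ kˣ. Let F = x₁x₂⋯x_{2p}·y_{2p} ∈ k[M_{2,2p}], i.e. the product of all the first-row variables X(0,r) (r ∈ Fin 2p) times the last second-row variable X(1, 2p−1). Then F ∈ ^H k[M_{2,2p}] but F ∉ GL_{2p} * j(^H k[M_{2,2}]). (Example in §2: the characteristic-zero polarization theorem fails for a torus in characteristic p.) -/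
open MvPolynomial

/-- The subgroup of `GL_2(k)` of diagonal matrices `diag(a⁻¹, a^{2p})`, `a ∈ kˣ`. -/
def torusH (k : Type*) [Field k] (p : ℕ) : Subgroup (GL (Fin 2) k) where
  carrier := {h | ∃ a : kˣ, (h : Matrix (Fin 2) (Fin 2) k)
      = Matrix.diagonal ![((a⁻¹ : kˣ) : k), (a : k) ^ (2 * p)]}
  one_mem' := ⟨1, by
    ext i j
    fin_cases i <;> fin_cases j <;> simp [Matrix.diagonal, Matrix.one_apply]⟩
  mul_mem' := by
    rintro u v ⟨a, ha⟩ ⟨b, hb⟩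
    refine ⟨a * b, ?_⟩
    rw [Units.val_mul, ha, hb, Matrix.diagonal_mul_diagonal]
    ext i j
    fin_cases i <;> fin_cases j <;> simp [Matrix.diagonal, mul_pow, mul_inv, mul_comm]
  inv_mem' := by
    rintro u ⟨a, ha⟩
    refine ⟨a⁻¹, ?_⟩
    have h1 : (u : Matrix (Fin 2) (Fin 2) k) *
        Matrix.diagonal ![((a⁻¹⁻¹ : kˣ) : k), ((a⁻¹ : kˣ) : k) ^ (2 * p)] = 1 := by
      rw [ha, Matrix.diagonal_mul_diagonal]
      ext i j
      fin_cases i <;> fin_cases j <;>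
        simp [Matrix.diagonal, Matrix.one_apply, ← mul_pow, Units.val_inv_eq_inv_val,
          mul_inv_cancel₀, inv_mul_cancel₀, a.ne_zero]
    exact Units.inv_eq_of_mul_eq_one_right h1


/-!
The torus `H` acts on the row-`i` variables through the character `a ↦ a ^ χ i`, where
`χ = (1, -2p)`. Over an infinite field its invariants are therefore exactly the polynomials of
`χ`-weight `0`, and `F` is one of them. Column operations preserve the `χ`-weight, so every
polarization `g * (j f)` again has weight `0`. A nonconstant weight-`0` monomial in
`k[M_{2,2}]` has row-`0` degree at least `2p`, hence contains `x₁ ^ p` or `x₂ ^ p`; `g` turns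
these into `p`-th powers of linear forms, which in characteristic `p` are sums of `p`-th powers
of variables, so the squarefree-in-row-`0` monomial `F` never occurs in a polarization. Finally
`F` admits no splitting into two nonconstant weight-`0` monomials (it has a single
negative-weight factor `y_{2p}`), so the coefficient of `F` vanishes on the whole algebra
generated by the polarizations.
-/

namespace MvPolynomial

variable {σ τ R M : Type*} [CommSemiring R] [AddCommMonoid M]

theorem IsWeightedHomogeneous.aeval {w₁ : σ → M} {w₂ : τ → M} {φ : σ → MvPolynomial τ R}
    (hφ : ∀ x, IsWeightedHomogeneous w₂ (φ x) (w₁ x)) {f : MvPolynomial σ R} {m : M}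
    (hf : IsWeightedHomogeneous w₁ f m) : IsWeightedHomogeneous w₂ (aeval φ f) m := by
  rw [f.as_sum, map_sum]
  refine IsWeightedHomogeneous.sum _ _ _ fun v hv => ?_
  rw [aeval_monomial, ← hf (mem_support_iff.mp hv), Finsupp.weight_apply, algebraMap_eq]
  exact (IsWeightedHomogeneous.prod _ _ _ fun x _ => (hφ x).pow (v x)).C_mul _

theorem coeff_aeval_C_mul_X (t : σ → R) (f : MvPolynomial σ R) (v : σ →₀ ℕ) :
    coeff v (aeval (fun x => C (t x) * X x) f) = (v.prod fun x e => t x ^ e) * coeff v f := by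
  classical
  induction f using MvPolynomial.induction_on' with
  | monomial u a =>
    have : aeval (fun x => C (t x) * X x) (monomial u a)
        = monomial u ((u.prod fun x e => t x ^ e) * a) := by
      rw [aeval_monomial, monomial_eq, algebraMap_eq, map_mul, map_finsuppProd]
      simp only [mul_pow, Finsupp.prod_mul, map_pow]
      ring
    rw [this, coeff_monomial, coeff_monomial]
    split_ifs with h
    · rw [h]
    · rw [mul_zero]
  | add f g hf hg => rw [map_add, coeff_add, coeff_add, hf, hg, mul_add]

theorem coeff_sum_X_mul_C_pow_mul_eq_zero {ι : Type*} (p : ℕ) [ExpChar R p] (s : Finset ι)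
    (x : ι → σ) (c : ι → R) (Q : MvPolynomial σ R) {μ : σ →₀ ℕ} (hμ : ∀ i ∈ s, μ (x i) < p) :
    coeff μ ((∑ i ∈ s, X (x i) * C (c i)) ^ p * Q) = 0 := by
  rw [sum_pow_char, Finset.sum_mul, coeff_sum]
  refine Finset.sum_eq_zero fun i hi => ?_
  rw [mul_pow, mul_assoc, X_pow_eq_monomial, coeff_monomial_mul', if_neg]
  simpa [Finsupp.single_le_iff] using hμ i hi

theorem coeff_eq_zero_of_mem_adjoin {w : σ → M} {m : σ →₀ ℕ} (hm : m ≠ 0)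
    (hindec : ∀ μ ν, μ + ν = m → Finsupp.weight w μ = 0 → Finsupp.weight w ν = 0 →
      μ = 0 ∨ ν = 0)
    {s : Set (MvPolynomial σ R)} (hs : ∀ P ∈ s, IsWeightedHomogeneous w P 0 ∧ coeff m P = 0)
    {P : MvPolynomial σ R} (hP : P ∈ Algebra.adjoin R s) : coeff m P = 0 := by
  classical
  suffices IsWeightedHomogeneous w P 0 ∧ coeff m P = 0 from this.2
  induction hP using Algebra.adjoin_induction with
  | mem P hP => exact hs P hP
  | algebraMap r =>
    exact ⟨isWeightedHomogeneous_C w r, by rw [algebraMap_eq, coeff_C, if_neg hm.symm]⟩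
  | add P Q _ _ hP hQ => exact ⟨hP.1.add hQ.1, by rw [coeff_add, hP.2, hQ.2, add_zero]⟩
  | mul P Q _ _ hP hQ =>
    refine ⟨by simpa using hP.1.mul hQ.1, ?_⟩
    rw [coeff_mul]
    refine Finset.sum_eq_zero fun ⟨μ, ν⟩ hμν => ?_
    rw [Finset.HasAntidiagonal.mem_antidiagonal] at hμν
    dsimp only at hμν ⊢
    by_cases hPμ : coeff μ P = 0
    · rw [hPμ, zero_mul]
    by_cases hQν : coeff ν Q = 0
    · rw [hQν, mul_zero]
    rcases hindec μ ν hμν (hP.1 hPμ) (hQ.1 hQν) with rfl | rfl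
    · rw [zero_add] at hμν
      exact absurd (hμν ▸ hQ.2) hQν
    · rw [add_zero] at hμν
      exact absurd (hμν ▸ hP.2) hPμ

end MvPolynomial

theorem Finsupp.eq_zero_or_eq_zero_of_add_eq_of_weight_eq_zero {σ : Type*} {w : σ → ℤ}
    {m μ ν : σ →₀ ℕ} {x₀ : σ} (hx₀ : m x₀ ≤ 1) (hw : ∀ x ∈ m.support, x ≠ x₀ → 0 < w x)
    (h : μ + ν = m) (hμ : weight w μ = 0) (hν : weight w ν = 0) : μ = 0 ∨ ν = 0 := by
  wlog hμ₀ : μ x₀ = 0 generalizing μ ν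
  · have hν₀ : ν x₀ = 0 := by
      have := congrArg (· x₀) h
      simp only [coe_add, Pi.add_apply] at this
      omega
    exact (this (add_comm ν μ ▸ h) hν hμ hν₀).symm
  by_contra! hne
  have hpos : 0 < weight w μ := by
    rw [weight_apply, Finsupp.sum]
    refine Finset.sum_pos (fun x hx => ?_) (support_nonempty_iff.mpr hne.1)
    have hxm : x ∈ m.support := by
      rw [← h, mem_support_iff, coe_add, Pi.add_apply]
      exact fun h0 => (mem_support_iff.mp hx) (by omega)
    have hxx₀ : x ≠ x₀ := by rintro rfl; exact (mem_support_iff.mp hx) hμ₀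
    exact smul_pos (Nat.pos_of_ne_zero (mem_support_iff.mp hx)) (hw x hxm hxx₀)
  omega

theorem Finsupp.prod_zpow_pow {σ G : Type*} [CommGroup G] (a : G) (w : σ → ℤ) (v : σ →₀ ℕ) :
    (v.prod fun x e => (a ^ w x) ^ e) = a ^ weight w v := by
  classical
  rw [weight_apply, Finsupp.sum, Finsupp.prod]
  induction v.support using Finset.induction_on with
  | empty => simp
  | insert x s hx ih =>
    rw [Finset.prod_insert hx, Finset.sum_insert hx, ih, zpow_add, nsmul_eq_mul, zpow_mul',
      zpow_natCast]

theorem exists_zpow_ne_one (k : Type*) [Field k] [Infinite k] {n : ℤ} (hn : n ≠ 0) :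
    ∃ a : kˣ, a ^ n ≠ 1 := by
  classical
  obtain ⟨x, hx⟩ :=
    Infinite.exists_notMem_finset (insert 0 (Polynomial.nthRootsFinset n.natAbs (1 : k)))
  rw [Finset.mem_insert, not_or, Polynomial.mem_nthRootsFinset (Int.natAbs_pos.mpr hn)] at hx
  refine ⟨Units.mk0 x hx.1, fun h => hx.2 ?_⟩
  rw [← pow_natAbs_eq_one] at h
  simpa using congrArg Units.val h

theorem MvPolynomial.isWeightedHomogeneous_zero_iff_forall_aeval_eq_self {σ k : Type*} [Field k]
    [Infinite k] (w : σ → ℤ) (f : MvPolynomial σ k) :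
    IsWeightedHomogeneous w f 0 ↔
      ∀ a : kˣ, aeval (fun x => C ((a ^ w x : kˣ) : k) * X x) f = f := by
  have hcoeff : ∀ (a : kˣ) v, coeff v (aeval (fun x => C ((a ^ w x : kˣ) : k) * X x) f)
      = ((a ^ Finsupp.weight w v : kˣ) : k) * coeff v f := fun a v => by
    rw [coeff_aeval_C_mul_X, ← Finsupp.prod_zpow_pow]
    simp [Finsupp.prod]
  constructor
  · intro hf a
    ext v
    rw [hcoeff]
    by_cases hv : coeff v f = 0
    · rw [hv, mul_zero]
    · rw [hf hv, zpow_zero, Units.val_one, one_mul]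
  · intro hf v hv
    by_contra hw
    obtain ⟨a, ha⟩ := exists_zpow_ne_one k hw
    have := hcoeff a v
    rw [hf a] at this
    exact ha (Units.val_eq_one.mp (mul_right_cancel₀ hv (by rw [one_mul]; exact this.symm)))

namespace TorusPolarization

variable {k : Type*} [Field k]

theorem isWeightedHomogeneous_colAct {n d : ℕ} {M : Type*} [AddCommMonoid M] (χ : Fin n → M)
    (g : GL (Fin d) k) {f : MvPolynomial (Fin n × Fin d) k} {m : M}
    (hf : IsWeightedHomogeneous (fun x => χ x.1) f m) :
    IsWeightedHomogeneous (fun x => χ x.1) (colAct g f) m :=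
  hf.aeval fun x => IsWeightedHomogeneous.sum _ _ _ fun s _ => by
    simpa using (isWeightedHomogeneous_X k (fun x => χ x.1) (x.1, s)).mul
      (isWeightedHomogeneous_C _ _)

theorem isWeightedHomogeneous_jmap {n d : ℕ} (hnd : n ≤ d) {M : Type*} [AddCommMonoid M]
    (χ : Fin n → M) {f : MvPolynomial (Fin n × Fin n) k} {m : M}
    (hf : IsWeightedHomogeneous (fun x => χ x.1) f m) :
    IsWeightedHomogeneous (fun x => χ x.1) (jmap hnd f) m :=
  hf.aeval fun _ => isWeightedHomogeneous_X k (fun x : Fin n × Fin d => χ x.1) _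

theorem rowAct_eq_aeval_of_inv_eq_diagonal {n d : ℕ} {h : GL (Fin n) k} {t : Fin n → k}
    (ht : ((h⁻¹ : GL (Fin n) k) : Matrix (Fin n) (Fin n) k) = Matrix.diagonal t) :
    (rowAct h : MvPolynomial (Fin n × Fin d) k →ₐ[k] _) = aeval fun x => C (t x.1) * X x := by
  refine algHom_ext fun x => ?_
  simp [rowAct, ht, Matrix.diagonal_apply, apply_ite C, ite_mul]

def torusWeight (p : ℕ) : Fin 2 → ℤ := ![1, -(2 * p)]

/-- `diag(a⁻¹, a ^ (2p))`; its inverse acts on row `i` by `a ^ torusWeight p i`. -/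
noncomputable def torusElt (p : ℕ) (a : kˣ) : GL (Fin 2) k :=
  Units.map (Matrix.diagonalRingHom (Fin 2) k).toMonoidHom
    (MulEquiv.piUnits.symm fun i => a ^ (-torusWeight p i))

theorem coe_torusElt (p : ℕ) (a : kˣ) :
    (torusElt p a : Matrix (Fin 2) (Fin 2) k)
      = Matrix.diagonal ![((a⁻¹ : kˣ) : k), (a : k) ^ (2 * p)] := by
  ext i j
  fin_cases i <;> fin_cases j <;> simp [torusElt, torusWeight]
  norm_cast

theorem mem_torusH_iff {p : ℕ} {h : GL (Fin 2) k} : h ∈ torusH k p ↔ ∃ a, torusElt p a = h :=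
  ⟨fun ⟨a, ha⟩ => ⟨a, Units.ext ((coe_torusElt p a).trans ha.symm)⟩,
    fun ⟨a, ha⟩ => ⟨a, ha ▸ coe_torusElt p a⟩⟩

theorem coe_torusElt_inv (p : ℕ) (a : kˣ) :
    (((torusElt p a)⁻¹ : GL (Fin 2) k) : Matrix (Fin 2) (Fin 2) k)
      = Matrix.diagonal fun i => ((a ^ torusWeight p i : kˣ) : k) := by
  simp [torusElt, ← map_inv]

theorem rowAct_torusElt {d p : ℕ} (a : kˣ) :
    (rowAct (torusElt p a) : MvPolynomial (Fin 2 × Fin d) k →ₐ[k] _)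
      = aeval fun x => C ((a ^ torusWeight p x.1 : kˣ) : k) * X x :=
  rowAct_eq_aeval_of_inv_eq_diagonal (t := fun i => ((a ^ torusWeight p i : kˣ) : k))
    (coe_torusElt_inv p a)

theorem mem_HinvAlg_torusH_iff [Infinite k] {d p : ℕ} {f : MvPolynomial (Fin 2 × Fin d) k} :
    f ∈ HinvAlg (torusH k p) ↔ IsWeightedHomogeneous (fun x => torusWeight p x.1) f 0 := by
  rw [isWeightedHomogeneous_zero_iff_forall_aeval_eq_self]
  change (∀ h ∈ torusH k p, rowAct h f = f) ↔ _
  simp only [mem_torusH_iff, forall_exists_index, forall_apply_eq_imp_iff, rowAct_torusElt]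

theorem exists_le_of_weight_eq_zero {p : ℕ} (hp : 0 < p) {v : Fin 2 × Fin 2 →₀ ℕ} (hv : v ≠ 0)
    (hw : Finsupp.weight (fun x => torusWeight p x.1) v = 0) : ∃ j, p ≤ v (0, j) := by
  rw [Finsupp.weight_apply, Finsupp.sum_fintype _ _ (by simp)] at hw
  simp only [torusWeight, Int.nsmul_eq_mul, Fintype.sum_prod_type, Fin.sum_univ_two,
    Fin.isValue, Matrix.cons_val_zero, mul_one, Matrix.cons_val_one, Matrix.cons_val_fin_one,
    mul_neg] at hw
  by_contra! hlt
  apply hv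
  have hrow1 : v (1, 0) + v (1, 1) = 0 := by
    by_contra hne
    have : (1 : ℤ) ≤ v (1, 0) + v (1, 1) := by exact_mod_cast Nat.one_le_iff_ne_zero.mpr hne
    have : (p : ℤ) > 0 := by exact_mod_cast hp
    have : (v (0, 0) : ℤ) < p := by exact_mod_cast hlt 0
    have : (v (0, 1) : ℤ) < p := by exact_mod_cast hlt 1
    nlinarith
  have h10 : v (1, 0) = 0 := by omega
  have h11 : v (1, 1) = 0 := by omega
  rw [h10, h11] at hw
  ext ⟨i, j⟩
  fin_cases i <;> fin_cases j <;> simp <;> omega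

theorem coeff_colAct_jmap_eq_zero {d p : ℕ} [ExpChar k p] (hnd : 2 ≤ d) (g : GL (Fin d) k)
    {f : MvPolynomial (Fin 2 × Fin 2) k}
    (hf : IsWeightedHomogeneous (fun x => torusWeight p x.1) f 0)
    {μ : Fin 2 × Fin d →₀ ℕ} (hμ : μ ≠ 0) (hμp : ∀ s, μ (0, s) < p) :
    coeff μ (colAct g (jmap hnd f)) = 0 := by
  rw [f.as_sum, map_sum, map_sum, coeff_sum]
  refine Finset.sum_eq_zero fun v hv => ?_
  rcases eq_or_ne v 0 with rfl | hv0
  · simp [← C_apply, coeff_C, hμ.symm]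
  obtain ⟨j, hj⟩ := exists_le_of_weight_eq_zero (expChar_pos k p) hv0 (hf (mem_support_iff.mp hv))
  obtain ⟨u, rfl⟩ : ∃ u, v = Finsupp.single (0, j) p + u :=
    ⟨_, (add_tsub_cancel_of_le (Finsupp.single_le_iff.mpr hj)).symm⟩
  rw [← one_mul (coeff _ f), ← monomial_mul, ← X_pow_eq_monomial, map_mul, map_mul, map_pow,
    map_pow]
  simp only [jmap, colAct, aeval_X]
  exact coeff_sum_X_mul_C_pow_mul_eq_zero p _ _ _ _ fun s _ => hμp s

noncomputable def exponentOfF (d : ℕ) (q : Fin d) : Fin 2 × Fin d →₀ ℕ :=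
  ∑ r, Finsupp.single (0, r) 1 + Finsupp.single (1, q) 1

theorem monomial_exponentOfF {d : ℕ} (q : Fin d) :
    monomial (exponentOfF d q) (1 : k) = (∏ r, X (0, r)) * X (1, q) := by
  rw [exponentOfF, ← mul_one (1 : k), ← monomial_mul, monomial_sum_one]
  rfl

theorem exponentOfF_apply_zero {d : ℕ} (q s : Fin d) : exponentOfF d q (0, s) = 1 := by
  simp [exponentOfF, Finsupp.single_apply]

theorem exponentOfF_apply_one {d : ℕ} (q s : Fin d) :
    exponentOfF d q (1, s) = if q = s then 1 else 0 := by
  simp [exponentOfF, Finsupp.single_apply]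

theorem isWeightedHomogeneous_prod_X_mul_X {p : ℕ} (q : Fin (2 * p)) :
    IsWeightedHomogeneous (fun x => torusWeight p x.1)
      ((∏ r, X (0, r)) * X (1, q) : MvPolynomial (Fin 2 × Fin (2 * p)) k) 0 := by
  have := (IsWeightedHomogeneous.prod Finset.univ _ _ fun r _ =>
    isWeightedHomogeneous_X k (fun x : Fin 2 × Fin (2 * p) => torusWeight p x.1) (0, r)).mul
      (isWeightedHomogeneous_X k _ (1, q))
  simpa [torusWeight] using this

theorem coeff_exponentOfF_eq_zero_of_mem_polarized [Infinite k] {d p : ℕ} [ExpChar k p]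
    (hp : 1 < p) (hnd : 2 ≤ d) (q : Fin d) {P : MvPolynomial (Fin 2 × Fin d) k}
    (hP : P ∈ polarized hnd (torusH k p)) : coeff (exponentOfF d q) P = 0 := by
  have hne : exponentOfF d q ≠ 0 := fun h => by
    simpa [exponentOfF_apply_one] using congrArg (· (1, q)) h
  refine coeff_eq_zero_of_mem_adjoin (w := fun x => torusWeight p x.1) hne
    (fun μ ν => Finsupp.eq_zero_or_eq_zero_of_add_eq_of_weight_eq_zero (x₀ := (1, q))
      (by simp [exponentOfF_apply_one]) ?_) ?_ hP
  · rintro ⟨i, s⟩ hx hne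
    obtain rfl | rfl : i = 0 ∨ i = 1 := by omega
    · simp [torusWeight]
    · rw [Finsupp.mem_support_iff, exponentOfF_apply_one, ite_ne_right_iff] at hx
      exact absurd (by rw [hx.1]) hne
  · rintro _ ⟨g, f, hf, rfl⟩
    have hf₀ := mem_HinvAlg_torusH_iff.mp hf
    exact ⟨isWeightedHomogeneous_colAct _ g (isWeightedHomogeneous_jmap hnd _ hf₀),
      coeff_colAct_jmap_eq_zero hnd g hf₀ hne fun s => (exponentOfF_apply_zero q s).trans_lt hp⟩

end TorusPolarization

open TorusPolarization in
/-- The Example of §2: for `char k = p > 0`, `n = 2`, `d = 2p` and `H` the torus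
`{diag(a⁻¹, a^{2p})}`, the invariant `F = x₁⋯x_{2p}·y_{2p}` is not a polarized invariant, so
`^H k[M_{2,2p}] ⊋ GL_{2p} * j(^H k[M_{2,2}])`. -/
theorem stmt9 {k : Type*} [Field k] [IsAlgClosed k] {p : ℕ} [CharP k p] (hp : 0 < p) :
    (∏ r : Fin (2 * p), X ((0 : Fin 2), r)) *
        X ((1 : Fin 2), (⟨2 * p - 1, by omega⟩ : Fin (2 * p))) ∈
      HinvAlg (torusH k p) ∧
    (∏ r : Fin (2 * p), X ((0 : Fin 2), r)) *
        X ((1 : Fin 2), (⟨2 * p - 1, by omega⟩ : Fin (2 * p))) ∉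
      polarized (show 2 ≤ 2 * p by omega) (torusH k p) := by
  have : NeZero p := ⟨hp.ne'⟩
  have hprime := CharP.char_is_prime_of_pos k p
  refine ⟨mem_HinvAlg_torusH_iff.mpr (isWeightedHomogeneous_prod_X_mul_X _), fun hF => ?_⟩
  rw [← monomial_exponentOfF] at hF
  simpa using
    coeff_exponentOfF_eq_zero_of_mem_polarized hprime.out.one_lt _ ⟨2 * p - 1, by omega⟩ hF
end

section
/- Suppose char k = 2 and let a ∈ k be a primitive cube root of unity. Let H be the subgroup of GL_2(k) generated by the scalar matrix a·I₂ (a cyclic group of order 3), and let d ≥ 3. Then the monomial x₁x₂x₃ = X(0,0)·X(0,1)·X(0,2) ∈ k[M_{2,d}] is H-invariant but does not belong to GL_d * j(^H k[M_{2,2}]); in particular GL_d * j(^H k[M_{2,2}]) ≠ ^H k[M_{2,d}]. (Example in Theorem 23(c).) -/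
open MvPolynomial

/-!
An invariant of `H = ⟨a·I₂⟩` has only monomials of degree divisible by 3. Work modulo the ideal
`I` spanned by the monomials not dividing `x₁x₂x₃`: the second-row variables vanish there, and
since `char k = 2` so does the square of every linear form in the first row. A polarization
`g * j f` is `f` evaluated at linear forms, two from each row, so modulo `I` it is `f` evaluated
at two square-zero elements and two zeros; only monomials of degree at most 2 survive, and of
those only the constant one occurs in `f`. Hence `GL_d * j(^H k[M_{2,2}])` is scalar modulo `I`,
while `x₁x₂x₃` is not.
-/

namespace MvPolynomial

section Scaling

variable {σ k : Type*} [Field k]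

theorem aeval_C_mul_X_monomial (c : k) (m : σ →₀ ℕ) (r : k) :
    aeval (fun i => C c * X i) (monomial m r) = monomial m (c ^ m.degree * r) := by
  classical
  rw [aeval_monomial, Finsupp.prod, Finsupp.degree_apply]
  simp_rw [mul_pow, Finset.prod_mul_distrib, ← map_pow, ← map_prod, Finset.prod_pow_eq_pow_sum]
  rw [← Finsupp.prod, ← monomial_eq, algebraMap_eq, C_mul_monomial, mul_comm]

theorem coeff_aeval_C_mul_X_s13 (c : k) (F : MvPolynomial σ k) (m : σ →₀ ℕ) :
    coeff m (aeval (fun i => C c * X i) F) = c ^ m.degree * coeff m F := by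
  classical
  induction F using MvPolynomial.induction_on' with
  | monomial u r =>
    rw [aeval_C_mul_X_monomial, coeff_monomial, coeff_monomial]
    split_ifs with h <;> simp [h]
  | add p q hp hq => rw [map_add, coeff_add, coeff_add, hp, hq, mul_add]

theorem aeval_C_mul_X_eq_self_iff (c : k) (F : MvPolynomial σ k) :
    aeval (fun i => C c * X i) F = F ↔ ∀ m ∈ F.support, c ^ m.degree = 1 := by
  refine ⟨fun h m hm => ?_, fun h => ?_⟩
  · have := congrArg (coeff m) h
    rw [coeff_aeval_C_mul_X_s13] at this
    exact mul_right_cancel₀ (mem_support_iff.mp hm) (this.trans (one_mul _).symm)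
  · ext m
    rw [coeff_aeval_C_mul_X_s13]
    by_cases hm : m ∈ F.support
    · rw [h m hm, one_mul]
    · rw [notMem_support_iff.mp hm, mul_zero]

end Scaling

end MvPolynomial

section ScalarSubgroup

variable {k : Type*} [Field k] {n d : ℕ}

theorem rowAct_units_map_algebraMap (c : kˣ) :
    rowAct (d := d) (Units.map (algebraMap k (Matrix (Fin n) (Fin n) k)).toMonoidHom c) =
      aeval fun p => C (↑c⁻¹ : k) * X p := by
  unfold rowAct
  congr 1
  funext p
  rw [← map_inv, Units.coe_map, Finset.sum_eq_single p.1]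
  · simp [Matrix.algebraMap_matrix_apply]
  · intro s _ hs
    simp [Matrix.algebraMap_matrix_apply, hs.symm]
  · simp

theorem mem_HinvAlg_zpowers_scalar_iff (u : kˣ) (F : MvPolynomial (Fin n × Fin d) k) :
    F ∈ HinvAlg (Subgroup.zpowers
        (Units.map (algebraMap k (Matrix (Fin n) (Fin n) k)).toMonoidHom u)) ↔
      ∀ m ∈ F.support, u ^ m.degree = 1 := by
  have hpow (x : kˣ) (e : ℕ) : (↑x⁻¹ : k) ^ e = 1 ↔ x ^ e = 1 := by
    rw [← Units.val_pow_eq_pow_val, Units.val_eq_one, inv_pow, inv_eq_one]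
  change (∀ h ∈ _, _) ↔ _
  simp only [Subgroup.forall_mem_zpowers, ← map_zpow, rowAct_units_map_algebraMap,
    aeval_C_mul_X_eq_self_iff, hpow]
  refine ⟨fun h => by simpa using h 1, fun h z m hm => ?_⟩
  rw [← zpow_natCast, ← zpow_mul, mul_comm, zpow_mul, zpow_natCast, h m hm, one_zpow]

theorem mem_HinvAlg_zpowers_primitiveRoot_iff {ζ : k} {r : ℕ} (hζ : IsPrimitiveRoot ζ r)
    (hr : r ≠ 0) (F : MvPolynomial (Fin n × Fin d) k) :
    F ∈ HinvAlg (Subgroup.zpowers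
        (Units.map (algebraMap k (Matrix (Fin n) (Fin n) k)).toMonoidHom (hζ.isUnit hr).unit)) ↔
      ∀ m ∈ F.support, r ∣ m.degree := by
  simp only [mem_HinvAlg_zpowers_scalar_iff, (hζ.isUnit_unit hr).pow_eq_one_iff_dvd]

end ScalarSubgroup

section SquareZero

variable {σ : Type*}

theorem Finsupp.prod_pow_eq_zero_of_card_lt_degree {R : Type*} [CommMonoidWithZero R]
    {v : σ → R} {T : Finset σ} (hsq : ∀ p, v p ^ 2 = 0) (hT : ∀ p ∉ T, v p = 0)
    {m : σ →₀ ℕ} (hm : T.card < m.degree) : m.prod (fun p e => v p ^ e) = 0 := by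
  classical
  by_contra hprod
  have h : ∀ p ∈ m.support, v p ^ m p ≠ 0 := fun p hp h0 => hprod (Finset.prod_eq_zero hp h0)
  have hle : ∀ p ∈ m.support, m p ≤ 1 := fun p hp => by
    by_contra hp2
    exact h p hp (pow_eq_zero_of_le (by omega) (hsq p))
  have hsub : m.support ⊆ T := fun p hp => by
    by_contra hpT
    exact h p hp (by rw [hT p hpT, zero_pow (Finsupp.mem_support_iff.mp hp)])
  have : m.degree ≤ T.card := calc
    m.degree = ∑ p ∈ m.support, m p := Finsupp.degree_apply m
    _ ≤ ∑ _p ∈ m.support, 1 := Finset.sum_le_sum hle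
    _ ≤ T.card := by simpa using Finset.card_le_card hsub
  omega

theorem MvPolynomial.aeval_eq_algebraMap_constantCoeff {k R : Type*} [CommSemiring k]
    [CommSemiring R] [Algebra k R] {v : σ → R} {T : Finset σ} (hsq : ∀ p, v p ^ 2 = 0)
    (hT : ∀ p ∉ T, v p = 0) (f : MvPolynomial σ k)
    (hf : ∀ m ∈ f.support, m ≠ 0 → T.card < m.degree) :
    aeval v f = algebraMap k R (constantCoeff f) := by
  conv_lhs => rw [f.as_sum, map_sum]
  rw [Finset.sum_eq_single 0]
  · simp [constantCoeff_eq]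
  · intro m hm hm0
    rw [aeval_monomial, Finsupp.prod_pow_eq_zero_of_card_lt_degree hsq hT (hf m hm hm0),
      mul_zero]
  · intro h0
    rw [notMem_support_iff.mp h0, monomial_zero, map_zero]

end SquareZero

theorem CharTwo.sq_sum_mul_mem {A ι : Type*} [CommRing A] [CharP A 2] (J : Ideal A)
    (s : Finset ι) (x y : ι → A) (hx : ∀ i ∈ s, x i ^ 2 ∈ J) :
    (∑ i ∈ s, x i * y i) ^ 2 ∈ J := by
  rw [CharTwo.sum_sq]
  exact J.sum_mem fun i hi => by rw [mul_pow]; exact J.mul_mem_right _ (hx i hi)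

namespace MvPolynomial

section NonDivisors

variable (k : Type*) {σ : Type*} [CommRing k]

noncomputable def nonDivisorsIdeal (μ : σ →₀ ℕ) : Ideal (MvPolynomial σ k) :=
  Ideal.span ((fun m => monomial m (1 : k)) '' {m | ¬ m ≤ μ})

variable {k}

theorem X_pow_mem_nonDivisorsIdeal {μ : σ →₀ ℕ} {p : σ} {e : ℕ} (h : μ p < e) :
    X p ^ e ∈ nonDivisorsIdeal k μ := by
  classical
  rw [X_pow_eq_monomial]
  exact Ideal.subset_span ⟨Finsupp.single p e, fun hle => (hle p).not_gt (by simpa using h), rfl⟩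

theorem mkₐ_monomial_notMem_bot [Nontrivial k] {μ : σ →₀ ℕ} (hμ : μ ≠ 0) :
    Ideal.Quotient.mkₐ k (nonDivisorsIdeal k μ) (monomial μ 1) ∉ (⊥ : Subalgebra k _) := by
  classical
  rintro ⟨c, hc⟩
  have hmem : monomial μ 1 - C c ∈ nonDivisorsIdeal k μ := by
    rw [← Ideal.Quotient.eq]
    exact hc.symm
  rw [nonDivisorsIdeal, mem_ideal_span_monomial_image] at hmem
  obtain ⟨m, hm, hmμ⟩ := hmem μ (by simp [coeff_C, hμ.symm])
  exact hm hmμ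

end NonDivisors

end MvPolynomial

section Monomials

variable {k : Type*} [Field k] {n d : ℕ}

theorem exists_monomial_eq_X_mul_X_mul_X (i : Fin n) {q₀ q₁ q₂ : Fin d} (h₀₁ : q₀ ≠ q₁)
    (h₀₂ : q₀ ≠ q₂) (h₁₂ : q₁ ≠ q₂) :
    ∃ μ : Fin n × Fin d →₀ ℕ, X (i, q₀) * X (i, q₁) * X (i, q₂) = monomial μ (1 : k) ∧
      μ.degree = 3 ∧ (∀ p, μ p ≤ 1) ∧ ∀ p, p.1 ≠ i → μ p = 0 := by
  classical
  refine ⟨Finsupp.single (i, q₀) 1 + Finsupp.single (i, q₁) 1 + Finsupp.single (i, q₂) 1,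
    by simp only [X, monomial_mul, mul_one], by simp, fun ⟨j, q⟩ => ?_, fun ⟨j, q⟩ hj => ?_⟩
  · simp only [Finsupp.add_apply, Finsupp.single_apply, Prod.mk.injEq]
    split_ifs <;> simp_all
  · simp_all

end Monomials

section Polarization

variable {k : Type*} [Field k] {n d : ℕ}

theorem colAct_jmap (hnd : n ≤ d) (g : GL (Fin d) k) (f : MvPolynomial (Fin n × Fin n) k) :
    colAct g (jmap hnd f) =
      aeval (fun p => ∑ s, X (p.1, s) * C ((g : Matrix (Fin d) (Fin d) k) s (p.2.castLE hnd)))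
        f := by
  rw [jmap, ← AlgHom.comp_apply, comp_aeval]
  simp only [colAct, aeval_X]

theorem polarized_le_comap_bot [CharP k 2] (hnd : n ≤ d) (H : Subgroup (GL (Fin n) k))
    (hH : ∀ f ∈ HinvAlg (d := n) H, ∀ m ∈ f.support, m ≠ 0 → n < m.degree)
    (i₀ : Fin n) {μ : Fin n × Fin d →₀ ℕ} (hμ : ∀ p, μ p ≤ 1)
    (hμi₀ : ∀ p, p.1 ≠ i₀ → μ p = 0) :
    polarized hnd H ≤
      (⊥ : Subalgebra k (MvPolynomial (Fin n × Fin d) k ⧸ nonDivisorsIdeal k μ)).comap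
        (Ideal.Quotient.mkₐ k _) := by
  refine Algebra.adjoin_le ?_
  rintro _ ⟨g, f, hf, rfl⟩
  rw [SetLike.mem_coe, Subalgebra.mem_comap, colAct_jmap, ← AlgHom.comp_apply, comp_aeval,
    aeval_eq_algebraMap_constantCoeff (T := {i₀} ×ˢ Finset.univ) ?_ ?_ f
      (by simpa using hH f hf)]
  · exact Subalgebra.algebraMap_mem _ _
  · intro p
    rw [← map_pow, Ideal.Quotient.mkₐ_eq_mk, Ideal.Quotient.eq_zero_iff_mem]
    exact CharTwo.sq_sum_mul_mem _ _ _ _ fun s _ =>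
      X_pow_mem_nonDivisorsIdeal (lt_of_le_of_lt (hμ _) one_lt_two)
  · intro p hp
    simp only [Finset.mem_product, Finset.mem_singleton, Finset.mem_univ, and_true] at hp
    rw [Ideal.Quotient.mkₐ_eq_mk, Ideal.Quotient.eq_zero_iff_mem]
    refine Ideal.sum_mem _ fun s _ => Ideal.mul_mem_right _ _ ?_
    simpa using X_pow_mem_nonDivisorsIdeal (e := 1) (by rw [hμi₀ _ hp]; exact one_pos)

end Polarization


/-- Theorem 23(c), first example: `char k = 2`, `H = ⟨a·I₂⟩` with `a` a primitive cube root
of unity. Then `x₁x₂x₃` is `H`-invariant but not polarized, so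
`GL_d * j(^H k[M_{2,2}]) ≠ ^H k[M_{2,d}]`. -/
theorem stmt13 {k : Type*} [Field k] [CharP k 2] {d : ℕ} (hd : 3 ≤ d)
    (a : k) (ha : IsPrimitiveRoot a 3)
    (H : Subgroup (GL (Fin 2) k))
    (hH : H = Subgroup.zpowers
      ((Units.map (algebraMap k (Matrix (Fin 2) (Fin 2) k)).toMonoidHom)
        (ha.isUnit (by norm_num)).unit : GL (Fin 2) k)) :
    (X ((0 : Fin 2), (⟨0, by omega⟩ : Fin d)) * X ((0 : Fin 2), (⟨1, by omega⟩ : Fin d)) *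
        X ((0 : Fin 2), (⟨2, by omega⟩ : Fin d)) ∈ HinvAlg H) ∧
    (X ((0 : Fin 2), (⟨0, by omega⟩ : Fin d)) * X ((0 : Fin 2), (⟨1, by omega⟩ : Fin d)) *
        X ((0 : Fin 2), (⟨2, by omega⟩ : Fin d)) ∉ polarized (by omega) H) ∧
    polarized (show 2 ≤ d by omega) H ≠ HinvAlg H := by
  classical
  obtain ⟨μ, hx, hμdeg, hμ1, hμ0⟩ := exists_monomial_eq_X_mul_X_mul_X (k := k) (0 : Fin 2)
    (q₀ := (⟨0, by omega⟩ : Fin d)) (q₁ := ⟨1, by omega⟩) (q₂ := ⟨2, by omega⟩)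
    (by simp [Fin.ext_iff]) (by simp [Fin.ext_iff]) (by simp [Fin.ext_iff])
  rw [hx]
  have hmem : monomial μ (1 : k) ∈ HinvAlg H := by
    rw [hH, mem_HinvAlg_zpowers_primitiveRoot_iff ha three_ne_zero, support_monomial,
      if_neg one_ne_zero]
    simp [hμdeg]
  have hinv (f : MvPolynomial (Fin 2 × Fin 2) k) (hf : f ∈ HinvAlg H) (m) (hm : m ∈ f.support)
      (hm0 : m ≠ 0) : 2 < m.degree := by
    rw [hH, mem_HinvAlg_zpowers_primitiveRoot_iff ha three_ne_zero] at hf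
    have h3 := hf m hm
    have := (Finsupp.degree_eq_zero_iff m).not.mpr hm0
    omega
  have hnot : monomial μ (1 : k) ∉ polarized (show 2 ≤ d by omega) H := fun h =>
    mkₐ_monomial_notMem_bot (fun h0 => by simp [h0] at hμdeg)
      (polarized_le_comap_bot _ H hinv 0 hμ1 hμ0 h)
  exact ⟨hmem, hnot, fun heq => hnot (heq ▸ hmem)⟩
end
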